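/- arXiv:2111.01514 — 11 statements merged into one kernel-verified Lean document; each statement's English description precedes it below -/
import Mathlib

section
/- Let 1 < p < q < ∞ and let ρ : (0,∞) → (0,∞) be a continuous concave function satisfying ρ(st) ≤ max(1,s)·ρ(t) for all s,t > 0. Define f : (0,∞) → (0,∞) by f(t) = t^{1/p}·ρ(t^{1/q − 1/p}). Then f is strictly increasing and maps (0,∞) onto (0,∞); in particular f has an inverse f⁻¹ : (0,∞) → (0,∞), and f⁻¹ is a Young function, i.e. f⁻¹ is continuous, strictly increasing and convex on (0,∞), f⁻¹(t)/t → ∞ as t → ∞, and f⁻¹(t)/t → 0 as t → 0. -/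
/-!
Write `P(u, v) = v ρ(u / v)` for the perspective of `ρ`, so that `f(t) = P(t^(1/q), t^(1/p))`.
The perspective of a concave function is jointly concave, and `ρ(st) ≤ max(1, s) ρ(t)` makes `P`
nondecreasing in both variables; composing with the concave maps `t ↦ t^(1/q)`, `t ↦ t^(1/p)`
shows that `f` is concave, hence continuous. Homogeneity of `P` gives `f(rt) ≥ r^(1/q) f(t)` for
`r ≥ 1`, so `f` is strictly increasing, and monotonicity of `P` squeezes `f(t)` between
`ρ(1) t^(1/q)` and `ρ(1) t^(1/p)`, so `f` maps `(0, ∞)` onto itself. The inverse of an increasing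
concave function is convex, and `f⁻¹(s) / s = t / f(t)` for `t = f⁻¹(s)`, which tends to `0` as
`t → 0` and to `∞` as `t → ∞` because `f(t)` is comparable with `t^(1/p)` and `p > 1`.
-/

open MeasureTheory Set Filter Topology ENNReal

noncomputable section

/-- A Young function on `(0,∞)`: strictly increasing, continuous, convex,
positive, with `Φ(t)/t → 0` as `t → 0⁺` and `Φ(t)/t → ∞` as `t → ∞`. -/
def IsYoungFunction (Φ : ℝ → ℝ) : Prop :=
  StrictMonoOn Φ (Set.Ioi 0) ∧ ContinuousOn Φ (Set.Ioi 0) ∧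
  ConvexOn ℝ (Set.Ioi 0) Φ ∧ (∀ t : ℝ, 0 < t → 0 < Φ t) ∧
  Filter.Tendsto (fun t => Φ t / t) (nhdsWithin 0 (Set.Ioi 0)) (nhds 0) ∧
  Filter.Tendsto (fun t => Φ t / t) Filter.atTop Filter.atTop

section ConcaveComp

variable {𝕜 E α β : Type*} [Semiring 𝕜] [PartialOrder 𝕜] [AddCommMonoid E] [SMul 𝕜 E]
  [AddCommMonoid α] [PartialOrder α] [SMul 𝕜 α] [AddCommMonoid β] [PartialOrder β] [SMul 𝕜 β]
  {s : Set E} {C : Set β}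

theorem ConcaveOn.prodMk {f : E → α} {g : E → β} (hf : ConcaveOn 𝕜 s f) (hg : ConcaveOn 𝕜 s g) :
    ConcaveOn 𝕜 s fun x => (f x, g x) :=
  ⟨hf.1, fun _ hx _ hy _ _ ha hb hab => ⟨hf.2 hx hy ha hb hab, hg.2 hx hy ha hb hab⟩⟩

theorem ConcaveOn.comp_of_mapsTo {f : E → β} {g : β → α} (hg : ConcaveOn 𝕜 C g)
    (hf : ConcaveOn 𝕜 s f) (hg' : MonotoneOn g C) (hfC : MapsTo f s C) :
    ConcaveOn 𝕜 s (g ∘ f) :=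
  ⟨hf.1, fun _ hx _ hy _ _ ha hb hab =>
    (hg.2 (hfC hx) (hfC hy) ha hb hab).trans <|
      hg' (hg.1 (hfC hx) (hfC hy) ha hb hab) (hfC <| hf.1 hx hy ha hb hab) (hf.2 hx hy ha hb hab)⟩

end ConcaveComp

theorem MonotoneOn.strictMonoOn_of_rightInvOn {α β : Type*} [LinearOrder α] [LinearOrder β]
    {F : α → β} {g : β → α} {s : Set α} {t : Set β} (hF : MonotoneOn F s) (hg : MapsTo g t s)
    (hgF : RightInvOn g F t) : StrictMonoOn g t := by
  intro x hx y hy hxy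
  by_contra! hle
  have hyx := hF (hg hy) (hg hx) hle
  rw [hgF hx, hgF hy] at hyx
  exact hxy.not_ge hyx

theorem ConcaveOn.convexOn_of_invOn {𝕜 E β : Type*} [Semiring 𝕜] [PartialOrder 𝕜]
    [AddCommMonoid E] [PartialOrder E] [SMul 𝕜 E] [AddCommMonoid β] [PartialOrder β] [SMul 𝕜 β]
    {F : E → β} {g : β → E} {s : Set E} {t : Set β} (hF : ConcaveOn 𝕜 s F) (ht : Convex 𝕜 t)
    (hg : MonotoneOn g t) (hinv : InvOn g F s t) (hgt : MapsTo g t s) (hFs : MapsTo F s t) :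
    ConvexOn 𝕜 t g := by
  refine ⟨ht, fun y₁ hy₁ y₂ hy₂ a b ha hb hab => ?_⟩
  have hx : a • g y₁ + b • g y₂ ∈ s := hF.1 (hgt hy₁) (hgt hy₂) ha hb hab
  have hconc := hF.2 (hgt hy₁) (hgt hy₂) ha hb hab
  rw [hinv.2 hy₁, hinv.2 hy₂] at hconc
  calc g (a • y₁ + b • y₂) ≤ g (F (a • g y₁ + b • g y₂)) :=
        hg (ht hy₁ hy₂ ha hb hab) (hFs hx) hconc
    _ = a • g y₁ + b • g y₂ := hinv.1 hx

section InverseLimits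

variable {F g : ℝ → ℝ}

theorem tendsto_atTop_of_leftInvOn (hg : MonotoneOn g (Ioi 0)) (hF : MapsTo F (Ioi 0) (Ioi 0))
    (hgF : LeftInvOn g F (Ioi 0)) : Tendsto g atTop atTop := by
  refine tendsto_atTop.2 fun M => ?_
  have hM : max M 1 ∈ Ioi (0 : ℝ) := mem_Ioi.2 (lt_max_of_lt_right one_pos)
  filter_upwards [eventually_ge_atTop (F (max M 1))] with s hs
  calc M ≤ max M 1 := le_max_left M 1
    _ = g (F (max M 1)) := (hgF hM).symm
    _ ≤ g s := hg (hF hM) ((hF hM).trans_le hs) hs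

theorem tendsto_nhdsGT_zero_of_leftInvOn (hg : StrictMonoOn g (Ioi 0))
    (hgpos : MapsTo g (Ioi 0) (Ioi 0)) (hF : MapsTo F (Ioi 0) (Ioi 0))
    (hgF : LeftInvOn g F (Ioi 0)) : Tendsto g (𝓝[>] 0) (𝓝[>] 0) := by
  refine tendsto_nhdsWithin_iff.2 ⟨tendsto_order.2 ⟨fun a ha => ?_, fun a ha => ?_⟩,
    eventually_mem_nhdsWithin.mono fun s hs => hgpos hs⟩
  · exact eventually_mem_nhdsWithin.mono fun s hs => ha.trans (hgpos hs)
  · filter_upwards [eventually_mem_nhdsWithin,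
      eventually_nhdsWithin_of_eventually_nhds (gt_mem_nhds (hF ha))] with s hs hsa
    calc g s < g (F a) := hg hs (hF ha) hsa
      _ = a := hgF ha

end InverseLimits

def perspective (ρ : ℝ → ℝ) (u v : ℝ) : ℝ := v * ρ (u / v)

section Perspective

variable {ρ : ℝ → ℝ} {u u' v v' : ℝ}

theorem perspective_mul_mul {c : ℝ} (hc : c ≠ 0) (u v : ℝ) :
    perspective ρ (c * u) (c * v) = c * perspective ρ u v := by
  simp only [perspective, mul_div_mul_left u v hc, mul_assoc]

theorem perspective_self (hu : u ≠ 0) : perspective ρ u u = u * ρ 1 := by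
  rw [perspective, div_self hu]

theorem perspective_le_perspective_left
    (hmul : ∀ s t : ℝ, 0 < s → 0 < t → ρ (s * t) ≤ max 1 s * ρ t)
    (hu : 0 < u) (hv : 0 < v) (huu' : u ≤ u') : perspective ρ u v ≤ perspective ρ u' v := by
  have hu' : 0 < u' := hu.trans_le huu'
  have key := hmul (u / u') (u' / v) (div_pos hu hu') (div_pos hu' hv)
  rw [max_eq_left ((div_le_one hu').2 huu'), one_mul, div_mul_div_cancel₀ hu'.ne'] at key
  exact mul_le_mul_of_nonneg_left key hv.le

theorem perspective_le_perspective_right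
    (hmul : ∀ s t : ℝ, 0 < s → 0 < t → ρ (s * t) ≤ max 1 s * ρ t)
    (hu : 0 < u) (hv : 0 < v) (hvv' : v ≤ v') : perspective ρ u v ≤ perspective ρ u v' := by
  have hv' : 0 < v' := hv.trans_le hvv'
  have key := hmul (v' / v) (u / v') (div_pos hv' hv) (div_pos hu hv')
  rw [max_eq_right ((one_le_div hv).2 hvv'), div_mul_div_cancel₀' hv'.ne'] at key
  calc v * ρ (u / v) ≤ v * (v' / v * ρ (u / v')) := mul_le_mul_of_nonneg_left key hv.le
    _ = v' * ρ (u / v') := by field_simp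

theorem monotoneOn_perspective (hmul : ∀ s t : ℝ, 0 < s → 0 < t → ρ (s * t) ≤ max 1 s * ρ t) :
    MonotoneOn (fun x : ℝ × ℝ => perspective ρ x.1 x.2) (Ioi 0 ×ˢ Ioi 0) := by
  rintro ⟨u, v⟩ ⟨hu, hv⟩ ⟨u', v'⟩ ⟨-, -⟩ ⟨huu', hvv'⟩
  exact (perspective_le_perspective_left hmul hu hv huu').trans
    (perspective_le_perspective_right hmul (hu.trans_le huu') hv hvv')

theorem concaveOn_perspective (hρ : ConcaveOn ℝ (Ioi 0) ρ) :
    ConcaveOn ℝ (Ioi 0 ×ˢ Ioi 0) fun x : ℝ × ℝ => perspective ρ x.1 x.2 := by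
  refine ⟨(convex_Ioi 0).prod (convex_Ioi 0), ?_⟩
  rintro ⟨u₁, v₁⟩ ⟨hu₁, hv₁⟩ ⟨u₂, v₂⟩ ⟨hu₂, hv₂⟩ a b ha hb hab
  simp only [mem_Ioi] at hu₁ hv₁ hu₂ hv₂
  simp only [Prod.smul_mk, Prod.mk_add_mk, smul_eq_mul, perspective]
  set v := a * v₁ + b * v₂
  have hv : 0 < v := by
    simpa using (convex_Ioi (0 : ℝ)) (mem_Ioi.2 hv₁) (mem_Ioi.2 hv₂) ha hb hab
  -- concavity of `ρ` with the weights `a v₁ / v` and `b v₂ / v`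
  have key := hρ.2 (mem_Ioi.2 (div_pos hu₁ hv₁)) (mem_Ioi.2 (div_pos hu₂ hv₂))
    (by positivity : 0 ≤ a * v₁ / v) (by positivity : 0 ≤ b * v₂ / v)
    (by rw [← add_div, div_self hv.ne'])
  simp only [smul_eq_mul] at key
  calc a * (v₁ * ρ (u₁ / v₁)) + b * (v₂ * ρ (u₂ / v₂))
      = v * (a * v₁ / v * ρ (u₁ / v₁) + b * v₂ / v * ρ (u₂ / v₂)) := by field_simp
    _ ≤ v * ρ (a * v₁ / v * (u₁ / v₁) + b * v₂ / v * (u₂ / v₂)) := by gcongr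
    _ = v * ρ ((a * u₁ + b * u₂) / v) := by congr 2; field_simp

end Perspective

def powPerspective (ρ : ℝ → ℝ) (a b t : ℝ) : ℝ := t ^ a * ρ (t ^ (b - a))

section PowPerspective

variable {ρ : ℝ → ℝ} {a b t : ℝ}

theorem powPerspective_eq_perspective (ht : 0 < t) :
    powPerspective ρ a b t = perspective ρ (t ^ b) (t ^ a) := by
  rw [powPerspective, perspective, Real.rpow_sub ht]

theorem powPerspective_pos (hpos : ∀ t : ℝ, 0 < t → 0 < ρ t) (ht : 0 < t) :
    0 < powPerspective ρ a b t :=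
  mul_pos (Real.rpow_pos_of_pos ht a) (hpos _ (Real.rpow_pos_of_pos ht _))

theorem concaveOn_powPerspective (hρ : ConcaveOn ℝ (Ioi 0) ρ)
    (hmul : ∀ s t : ℝ, 0 < s → 0 < t → ρ (s * t) ≤ max 1 s * ρ t)
    (ha₀ : 0 ≤ a) (ha₁ : a ≤ 1) (hb₀ : 0 ≤ b) (hb₁ : b ≤ 1) :
    ConcaveOn ℝ (Ioi 0) (powPerspective ρ a b) := by
  have hpow {r : ℝ} (hr₀ : 0 ≤ r) (hr₁ : r ≤ 1) : ConcaveOn ℝ (Ioi 0) fun t : ℝ => t ^ r :=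
    (Real.concaveOn_rpow hr₀ hr₁).subset Ioi_subset_Ici_self (convex_Ioi 0)
  refine ((concaveOn_perspective hρ).comp_of_mapsTo ((hpow hb₀ hb₁).prodMk (hpow ha₀ ha₁))
    (monotoneOn_perspective hmul) ?_).congr fun t ht => (powPerspective_eq_perspective ht).symm
  exact fun t ht => ⟨Real.rpow_pos_of_pos ht b, Real.rpow_pos_of_pos ht a⟩

theorem strictMonoOn_powPerspective (hpos : ∀ t : ℝ, 0 < t → 0 < ρ t)
    (hmul : ∀ s t : ℝ, 0 < s → 0 < t → ρ (s * t) ≤ max 1 s * ρ t) (hb : 0 < b) (hba : b ≤ a) :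
    StrictMonoOn (powPerspective ρ a b) (Ioi 0) := by
  intro x hx y hy hxy
  simp only [mem_Ioi] at hx hy
  set r := y / x
  have hr : 1 < r := (one_lt_div hx).2 hxy
  have hy_eq : y = r * x := (div_mul_cancel₀ y hx.ne').symm
  calc powPerspective ρ a b x < r ^ b * powPerspective ρ a b x :=
        lt_mul_left (powPerspective_pos hpos hx) (Real.one_lt_rpow hr hb)
    _ = perspective ρ (r ^ b * x ^ b) (r ^ b * x ^ a) := by
        rw [powPerspective_eq_perspective hx, perspective_mul_mul (by positivity)]
    _ ≤ perspective ρ (r ^ b * x ^ b) (r ^ a * x ^ a) :=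
        perspective_le_perspective_right hmul (by positivity) (by positivity)
          (by gcongr; exact hr.le)
    _ = powPerspective ρ a b y := by
        rw [powPerspective_eq_perspective hy, hy_eq, Real.mul_rpow (by positivity) hx.le,
          Real.mul_rpow (by positivity) hx.le]

theorem powPerspective_mem_Icc_of_one_le
    (hmul : ∀ s t : ℝ, 0 < s → 0 < t → ρ (s * t) ≤ max 1 s * ρ t) (hba : b ≤ a) (ht : 1 ≤ t) :
    powPerspective ρ a b t ∈ Icc (t ^ b * ρ 1) (t ^ a * ρ 1) := by
  have ht₀ : 0 < t := one_pos.trans_le ht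
  have hle : t ^ b ≤ t ^ a := Real.rpow_le_rpow_of_exponent_le ht hba
  rw [powPerspective_eq_perspective ht₀, ← perspective_self (Real.rpow_pos_of_pos ht₀ b).ne',
    ← perspective_self (Real.rpow_pos_of_pos ht₀ a).ne']
  exact ⟨perspective_le_perspective_right hmul (by positivity) (by positivity) hle,
    perspective_le_perspective_left hmul (by positivity) (by positivity) hle⟩

theorem powPerspective_mem_Icc_of_le_one
    (hmul : ∀ s t : ℝ, 0 < s → 0 < t → ρ (s * t) ≤ max 1 s * ρ t) (hba : b ≤ a)
    (ht₀ : 0 < t) (ht : t ≤ 1) :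
    powPerspective ρ a b t ∈ Icc (t ^ a * ρ 1) (t ^ b * ρ 1) := by
  have hle : t ^ a ≤ t ^ b := Real.rpow_le_rpow_of_exponent_ge ht₀ ht hba
  rw [powPerspective_eq_perspective ht₀, ← perspective_self (Real.rpow_pos_of_pos ht₀ b).ne',
    ← perspective_self (Real.rpow_pos_of_pos ht₀ a).ne']
  exact ⟨perspective_le_perspective_left hmul (by positivity) (by positivity) hle,
    perspective_le_perspective_right hmul (by positivity) (by positivity) hle⟩

theorem tendsto_powPerspective_nhdsGT_zero (hpos : ∀ t : ℝ, 0 < t → 0 < ρ t)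
    (hmul : ∀ s t : ℝ, 0 < s → 0 < t → ρ (s * t) ≤ max 1 s * ρ t) (hb : 0 < b) (hba : b ≤ a) :
    Tendsto (powPerspective ρ a b) (𝓝[>] 0) (𝓝 0) := by
  have hbound : Tendsto (fun t : ℝ => t ^ b * ρ 1) (𝓝[>] 0) (𝓝 0) := by
    simpa using ((tendsto_id.mono_left nhdsWithin_le_nhds).rpow_const_nhds_zero hb).mul_const (ρ 1)
  refine squeeze_zero' (eventually_mem_nhdsWithin.mono fun t ht => (powPerspective_pos hpos ht).le)
    ?_ hbound
  filter_upwards [Ioo_mem_nhdsGT one_pos] with t ht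
  exact (powPerspective_mem_Icc_of_le_one hmul hba ht.1 ht.2.le).2

theorem tendsto_powPerspective_atTop (hpos : ∀ t : ℝ, 0 < t → 0 < ρ t)
    (hmul : ∀ s t : ℝ, 0 < s → 0 < t → ρ (s * t) ≤ max 1 s * ρ t) (hb : 0 < b) (hba : b ≤ a) :
    Tendsto (powPerspective ρ a b) atTop atTop :=
  tendsto_atTop_mono' atTop
    ((eventually_ge_atTop 1).mono fun _ ht => (powPerspective_mem_Icc_of_one_le hmul hba ht).1)
    ((tendsto_rpow_atTop hb).atTop_mul_const (hpos 1 one_pos))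

theorem bijOn_powPerspective (hρ : ConcaveOn ℝ (Ioi 0) ρ) (hpos : ∀ t : ℝ, 0 < t → 0 < ρ t)
    (hmul : ∀ s t : ℝ, 0 < s → 0 < t → ρ (s * t) ≤ max 1 s * ρ t)
    (hb : 0 < b) (hba : b ≤ a) (ha : a ≤ 1) :
    BijOn (powPerspective ρ a b) (Ioi 0) (Ioi 0) := by
  refine ⟨fun t ht => powPerspective_pos hpos ht,
    (strictMonoOn_powPerspective hpos hmul hb hba).injOn, ?_⟩
  have hcont : ContinuousOn (powPerspective ρ a b) (Ioi 0) :=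
    (concaveOn_powPerspective hρ hmul (hb.le.trans hba) ha hb.le (hba.trans ha)).continuousOn
      isOpen_Ioi
  exact isPreconnected_Ioi.intermediate_value_Ioi (l₁ := 𝓝[>] 0) inf_le_right
    (le_principal_iff.2 (Ioi_mem_atTop 0)) hcont
    (tendsto_powPerspective_nhdsGT_zero hpos hmul hb hba)
    (tendsto_powPerspective_atTop hpos hmul hb hba)

theorem tendsto_div_powPerspective_nhdsGT_zero (hpos : ∀ t : ℝ, 0 < t → 0 < ρ t)
    (hmul : ∀ s t : ℝ, 0 < s → 0 < t → ρ (s * t) ≤ max 1 s * ρ t) (hba : b ≤ a) (ha : a < 1) :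
    Tendsto (fun t => t / powPerspective ρ a b t) (𝓝[>] 0) (𝓝 0) := by
  have hρ1 := hpos 1 one_pos
  have hbound : Tendsto (fun t : ℝ => t ^ (1 - a) / ρ 1) (𝓝[>] 0) (𝓝 0) := by
    simpa using
      ((tendsto_id.mono_left nhdsWithin_le_nhds).rpow_const_nhds_zero (sub_pos.2 ha)).div_const
        (ρ 1)
  refine squeeze_zero' (eventually_mem_nhdsWithin.mono fun t ht =>
    (div_pos ht (powPerspective_pos hpos ht)).le) ?_ hbound
  filter_upwards [Ioo_mem_nhdsGT one_pos] with t ⟨ht₀, ht₁⟩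
  calc t / powPerspective ρ a b t ≤ t / (t ^ a * ρ 1) :=
        div_le_div_of_nonneg_left ht₀.le (by positivity)
          (powPerspective_mem_Icc_of_le_one hmul hba ht₀ ht₁.le).1
    _ = t ^ (1 - a) / ρ 1 := by rw [Real.rpow_sub ht₀, Real.rpow_one, div_mul_eq_div_div]

theorem tendsto_div_powPerspective_atTop (hpos : ∀ t : ℝ, 0 < t → 0 < ρ t)
    (hmul : ∀ s t : ℝ, 0 < s → 0 < t → ρ (s * t) ≤ max 1 s * ρ t) (hba : b ≤ a) (ha : a < 1) :
    Tendsto (fun t => t / powPerspective ρ a b t) atTop atTop := by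
  refine tendsto_atTop_mono' atTop ?_
    ((tendsto_rpow_atTop (sub_pos.2 ha)).atTop_div_const (hpos 1 one_pos))
  filter_upwards [eventually_ge_atTop 1] with t ht
  have ht₀ : 0 < t := one_pos.trans_le ht
  calc t ^ (1 - a) / ρ 1 = t / (t ^ a * ρ 1) := by
        rw [Real.rpow_sub ht₀, Real.rpow_one, div_mul_eq_div_div]
    _ ≤ t / powPerspective ρ a b t :=
        div_le_div_of_nonneg_left ht₀.le (powPerspective_pos hpos ht₀)
          (powPerspective_mem_Icc_of_one_le hmul hba ht).2

end PowPerspective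

theorem class_P_functions_are_Young_functions_general
    (p q : ℝ) (hp : 1 < p) (hpq : p < q)
    (ρ : ℝ → ℝ)
    (hρconc : ConcaveOn ℝ (Set.Ioi 0) ρ)
    (hρpos : ∀ t : ℝ, 0 < t → 0 < ρ t)
    (hρmul : ∀ s t : ℝ, 0 < s → 0 < t → ρ (s * t) ≤ max 1 s * ρ t) :
    StrictMonoOn (fun t : ℝ => t ^ (1/p) * ρ (t ^ (1/q - 1/p))) (Set.Ioi 0) ∧
    (fun t : ℝ => t ^ (1/p) * ρ (t ^ (1/q - 1/p))) '' (Set.Ioi 0) = Set.Ioi 0 ∧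
    ∃ g : ℝ → ℝ,
      (∀ t : ℝ, 0 < t → g (t ^ (1/p) * ρ (t ^ (1/q - 1/p))) = t) ∧
      (∀ s : ℝ, 0 < s → 0 < g s ∧ (g s) ^ (1/p) * ρ ((g s) ^ (1/q - 1/p)) = s) ∧
      IsYoungFunction g := by
  have hp₀ : 0 < p := one_pos.trans hp
  have ha : 1 / p < 1 := (div_lt_one hp₀).2 hp
  have hb : 0 < 1 / q := one_div_pos.2 (hp₀.trans hpq)
  have hba : 1 / q ≤ 1 / p := one_div_le_one_div_of_le hp₀ hpq.le
  set F := powPerspective ρ (1 / p) (1 / q)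
  have hFmono : StrictMonoOn F (Ioi 0) := strictMonoOn_powPerspective hρpos hρmul hb hba
  have hbij : BijOn F (Ioi 0) (Ioi 0) := bijOn_powPerspective hρconc hρpos hρmul hb hba ha.le
  set g := Function.invFunOn F (Ioi 0)
  have hinv : InvOn g F (Ioi 0) (Ioi 0) := hbij.invOn_invFunOn
  have hg : MapsTo g (Ioi 0) (Ioi 0) := hbij.surjOn.mapsTo_invFunOn
  have hgmono : StrictMonoOn g (Ioi 0) := hFmono.monotoneOn.strictMonoOn_of_rightInvOn hg hinv.2
  have hgconv : ConvexOn ℝ (Ioi 0) g :=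
    (concaveOn_powPerspective hρconc hρmul (hb.le.trans hba) ha.le hb.le
      (hba.trans ha.le)).convexOn_of_invOn (convex_Ioi 0) hgmono.monotoneOn hinv hg hbij.mapsTo
  refine ⟨hFmono, hbij.image_eq, g, hinv.1, fun s hs => ⟨hg hs, hinv.2 hs⟩, hgmono,
    hgconv.continuousOn isOpen_Ioi, hgconv, fun s hs => hg hs, ?_, ?_⟩
  · exact ((tendsto_div_powPerspective_nhdsGT_zero hρpos hρmul hba ha).comp
      (tendsto_nhdsGT_zero_of_leftInvOn hgmono hg hbij.mapsTo hinv.1)).congr'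
      (eventually_mem_nhdsWithin.mono fun s hs => congrArg (g s / ·) (hinv.2 hs))
  · exact ((tendsto_div_powPerspective_atTop hρpos hρmul hba ha).comp
      (tendsto_atTop_of_leftInvOn hgmono.monotoneOn hbij.mapsTo hinv.1)).congr'
      ((eventually_gt_atTop 0).mono fun s hs => congrArg (g s / ·) (hinv.2 hs))

/-- if `1 < p < q < ∞` and `ρ : (0,∞) → (0,∞)` is continuous, concave and
satisfies `ρ(st) ≤ max(1,s)·ρ(t)`, then `f(t) = t^(1/p)·ρ(t^(1/q−1/p))` is strictly
increasing from `(0,∞)` onto `(0,∞)`, and its inverse is a Young function. -/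
theorem class_P_functions_are_Young_functions
    (p q : ℝ) (hp : 1 < p) (hpq : p < q)
    (ρ : ℝ → ℝ) (hρcont : ContinuousOn ρ (Set.Ioi 0))
    (hρconc : ConcaveOn ℝ (Set.Ioi 0) ρ)
    (hρpos : ∀ t : ℝ, 0 < t → 0 < ρ t)
    (hρmul : ∀ s t : ℝ, 0 < s → 0 < t → ρ (s * t) ≤ max 1 s * ρ t) :
    StrictMonoOn (fun t : ℝ => t ^ (1/p) * ρ (t ^ (1/q - 1/p))) (Set.Ioi 0) ∧
    (fun t : ℝ => t ^ (1/p) * ρ (t ^ (1/q - 1/p))) '' (Set.Ioi 0) = Set.Ioi 0 ∧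
    ∃ g : ℝ → ℝ,
      (∀ t : ℝ, 0 < t → g (t ^ (1/p) * ρ (t ^ (1/q - 1/p))) = t) ∧
      (∀ s : ℝ, 0 < s → 0 < g s ∧ (g s) ^ (1/p) * ρ ((g s) ^ (1/q - 1/p)) = s) ∧
      IsYoungFunction g :=
  class_P_functions_are_Young_functions_general p q hp hpq ρ hρconc hρpos hρmul
end
end

section
/- Let 1 < p < q < ∞ and let ρ : (0,∞) → (0,∞) be a continuous concave function satisfying ρ(st) ≤ max(1,s)·ρ(t) for all s,t > 0. Define f : (0,∞) → (0,∞) by f(t) = t^{1/p}·ρ(t^{1/q − 1/p}). Then for all s,t > 0: min(s^{1/p}, s^{1/q})·f(t) ≤ f(st) ≤ max(s^{1/p}, s^{1/q})·f(t). -/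
open MeasureTheory Set Filter Topology ENNReal

noncomputable section

/-- for `1 < p < q < ∞` and `ρ : (0,∞) → (0,∞)` continuous, concave with
`ρ(st) ≤ max(1,s)·ρ(t)`, the function `f(t) = t^(1/p)·ρ(t^(1/q−1/p))` satisfies
`min(s^(1/p), s^(1/q))·f(t) ≤ f(st) ≤ max(s^(1/p), s^(1/q))·f(t)` for all `s,t > 0`. -/
theorem class_P_two_sided_estimate
    (p q : ℝ) (hp : 1 < p) (hpq : p < q)
    (ρ : ℝ → ℝ) (hρcont : ContinuousOn ρ (Set.Ioi 0))
    (hρconc : ConcaveOn ℝ (Set.Ioi 0) ρ)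
    (hρpos : ∀ t : ℝ, 0 < t → 0 < ρ t)
    (hρmul : ∀ s t : ℝ, 0 < s → 0 < t → ρ (s * t) ≤ max 1 s * ρ t) :
    ∀ s t : ℝ, 0 < s → 0 < t →
      min (s ^ (1/p)) (s ^ (1/q)) * (t ^ (1/p) * ρ (t ^ (1/q - 1/p)))
          ≤ (s * t) ^ (1/p) * ρ ((s * t) ^ (1/q - 1/p)) ∧
      (s * t) ^ (1/p) * ρ ((s * t) ^ (1/q - 1/p))
          ≤ max (s ^ (1/p)) (s ^ (1/q)) * (t ^ (1/p) * ρ (t ^ (1/q - 1/p))) := by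
  intro s t hs ht
  have hst : 0 < s * t := mul_pos hs ht
  set a : ℝ := 1/q - 1/p with ha
  have hsa : (0:ℝ) < s ^ a := Real.rpow_pos_of_pos hs a
  have hta : (0:ℝ) < t ^ a := Real.rpow_pos_of_pos ht a
  have hsta : (0:ℝ) < (s*t) ^ a := Real.rpow_pos_of_pos hst a
  have hsp : (0:ℝ) < s ^ (1/p) := Real.rpow_pos_of_pos hs _
  have htp : (0:ℝ) < t ^ (1/p) := Real.rpow_pos_of_pos ht _
  have hmulrw : (s*t) ^ a = s ^ a * t ^ a := Real.mul_rpow hs.le ht.le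
  have hmulrw' : (s*t) ^ (1/p) = s ^ (1/p) * t ^ (1/p) := Real.mul_rpow hs.le ht.le
  have key : 1/p + a = 1/q := by rw [ha]; ring
  have hq : s ^ (1/p) * s ^ a = s ^ (1/q) := by
    rw [← Real.rpow_add hs, key]
  have hmax : s ^ (1/p) * max 1 (s ^ a) = max (s ^ (1/p)) (s ^ (1/q)) := by
    rw [mul_max_of_nonneg _ _ hsp.le, mul_one, hq]
  have hmin : s ^ (1/p) * min 1 (s ^ a) = min (s ^ (1/p)) (s ^ (1/q)) := by
    rw [mul_min_of_nonneg _ _ hsp.le, mul_one, hq]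
  have hρt : 0 < ρ (t ^ a) := hρpos _ hta
  have hρst : 0 < ρ ((s*t) ^ a) := hρpos _ hsta
  constructor
  · -- lower bound
    have h2 : min 1 (s ^ a) * ρ (t ^ a) ≤ ρ ((s*t) ^ a) := by
      have h1 := hρmul (s ^ (-a)) ((s*t) ^ a) (Real.rpow_pos_of_pos hs _) hsta
      have heq : s ^ (-a) * (s*t) ^ a = t ^ a := by
        rw [hmulrw, ← mul_assoc, ← Real.rpow_add hs]; simp
      rw [heq] at h1
      have hinv : s ^ (-a) = (s ^ a)⁻¹ := by
        rw [Real.rpow_neg hs.le]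
      rcases le_total (s ^ a) 1 with h | h
      · rw [min_eq_right h]
        have hmx : max 1 (s ^ (-a)) = (s ^ a)⁻¹ := by
          rw [hinv, max_eq_right]
          exact (one_le_inv₀ (by positivity)).mpr h
        rw [hmx] at h1
        rw [mul_comm]
        exact (le_div_iff₀ hsa).mp (by rwa [div_eq_mul_inv, mul_comm])
      · rw [min_eq_left h]
        have hmx : max 1 (s ^ (-a)) = 1 := by
          rw [hinv, max_eq_left]
          exact inv_le_one_of_one_le₀ h
        rw [hmx, one_mul] at h1
        linarith
    rw [← hmin, hmulrw']
    calc s ^ (1/p) * min 1 (s ^ a) * (t ^ (1/p) * ρ (t ^ a))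
        = s ^ (1/p) * t ^ (1/p) * (min 1 (s ^ a) * ρ (t ^ a)) := by ring
      _ ≤ s ^ (1/p) * t ^ (1/p) * ρ ((s*t) ^ a) := by
          apply mul_le_mul_of_nonneg_left h2 (by positivity)
  · -- upper bound
    have h2 : ρ ((s*t) ^ a) ≤ max 1 (s ^ a) * ρ (t ^ a) := by
      rw [hmulrw]; exact hρmul _ _ hsa hta
    rw [← hmax, hmulrw']
    calc s ^ (1/p) * t ^ (1/p) * ρ ((s*t) ^ a)
        ≤ s ^ (1/p) * t ^ (1/p) * (max 1 (s ^ a) * ρ (t ^ a)) := by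
          apply mul_le_mul_of_nonneg_left h2 (by positivity)
      _ = s ^ (1/p) * max 1 (s ^ a) * (t ^ (1/p) * ρ (t ^ a)) := by ring
end
end

section
/- Let Φ be of class 𝒫 with parameters 1 < p < q < ∞ and let Φ̃ be its complementary Young function. Then for all s,t > 0: Φ(st) ≤ max(s^p, s^q)·Φ(t) and Φ̃(st) ≤ max(s^{p'}, s^{q'})·Φ̃(t), where p', q' are the Hölder conjugates of p, q. In particular, both Φ and Φ̃ satisfy the Δ₂-condition globally, i.e. there are constants K, K̃ > 0 with Φ(2t) ≤ K·Φ(t) and Φ̃(2t) ≤ K̃·Φ̃(t) for all t > 0. -/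
open MeasureTheory Set Filter Topology ENNReal

noncomputable section

/-- `Φ` is of class `𝒫` with parameters `1 < p < q < ∞`: `Φ` maps `(0,∞)` bijectively
onto `(0,∞)` with inverse `Φinv`, and `Φinv t = t^(1/p)·ρ(t^(1/q−1/p))` for a continuous
concave `ρ : (0,∞) → (0,∞)` with `ρ(st) ≤ max(1,s)·ρ(t)`. -/
def IsClassP (Φ Φinv : ℝ → ℝ) (p q : ℝ) : Prop :=
  1 < p ∧ p < q ∧
  (∀ t : ℝ, 0 < t → 0 < Φ t) ∧ (∀ t : ℝ, 0 < t → 0 < Φinv t) ∧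
  (∀ t : ℝ, 0 < t → Φinv (Φ t) = t) ∧ (∀ t : ℝ, 0 < t → Φ (Φinv t) = t) ∧
  ∃ ρ : ℝ → ℝ, ContinuousOn ρ (Set.Ioi 0) ∧ ConcaveOn ℝ (Set.Ioi 0) ρ ∧
    (∀ t : ℝ, 0 < t → 0 < ρ t) ∧
    (∀ s t : ℝ, 0 < s → 0 < t → ρ (s * t) ≤ max 1 s * ρ t) ∧
    (∀ t : ℝ, 0 < t → Φinv t = t ^ (1/p) * ρ (t ^ (1/q - 1/p)))

/-- if `Φ` is of class `𝒫` with parameters `1 < p < q` and `Φ̃` is its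
complementary Young function, then `Φ(st) ≤ max(s^p, s^q)·Φ(t)` and
`Φ̃(st) ≤ max(s^{p'}, s^{q'})·Φ̃(t)` for all `s,t > 0`, where `p' = p/(p−1)`,
`q' = q/(q−1)`; in particular both satisfy the `Δ₂`-condition globally. -/
theorem class_P_Delta2_estimates
    (Φ Φinv Φt : ℝ → ℝ) (p q : ℝ) (hΦ : IsClassP Φ Φinv p q)
    (hΦ0 : Φ 0 = 0)
    (hΦt : ∀ s : ℝ, Φt s = sSup {x : ℝ | ∃ t : ℝ, 0 ≤ t ∧ x = s * t - Φ t}) :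
    (∀ s t : ℝ, 0 < s → 0 < t → Φ (s * t) ≤ max (s ^ p) (s ^ q) * Φ t) ∧
    (∀ s t : ℝ, 0 < s → 0 < t →
      Φt (s * t) ≤ max (s ^ (p / (p - 1))) (s ^ (q / (q - 1))) * Φt t) ∧
    (∃ K : ℝ, 0 < K ∧ ∀ t : ℝ, 0 < t → Φ (2 * t) ≤ K * Φ t) ∧
    (∃ K : ℝ, 0 < K ∧ ∀ t : ℝ, 0 < t → Φt (2 * t) ≤ K * Φt t) := by
  obtain ⟨hp, hpq, hΦpos, hΦinvpos, hli, hri, ρ, -, -, hρpos, hρhom, hform⟩ := hΦ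
  have hp0 : (0:ℝ) < p := by linarith
  have hq0 : (0:ℝ) < q := by linarith
  -- Lemma A : Φinv is "quasi-homogeneous" from below
  have lemA : ∀ l t : ℝ, 0 < l → 0 < t →
      min (l ^ (1/p)) (l ^ (1/q)) * Φinv t ≤ Φinv (l * t) := by
    intro l t hl ht
    have hlt : 0 < l * t := mul_pos hl ht
    set α := 1/q - 1/p with hα
    have hlα : 0 < l ^ α := Real.rpow_pos_of_pos hl α
    have htα : 0 < t ^ α := Real.rpow_pos_of_pos ht α
    have hρt : 0 < ρ (t ^ α) := hρpos _ htα
    have hρlt : 0 < ρ (l ^ α * t ^ α) := hρpos _ (mul_pos hlα htα)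
    have key : ρ (t ^ α) ≤ max 1 (l ^ (-α)) * ρ (l ^ α * t ^ α) := by
      have h := hρhom (l ^ (-α)) (l ^ α * t ^ α) (Real.rpow_pos_of_pos hl _)
        (mul_pos hlα htα)
      have e : l ^ (-α) * (l ^ α * t ^ α) = t ^ α := by
        rw [← mul_assoc, ← Real.rpow_add hl]; simp
      rwa [e] at h
    have hminmax : min 1 (l ^ α) * max 1 (l ^ (-α)) = 1 := by
      rw [Real.rpow_neg hl.le]
      rcases le_total (l ^ α) 1 with h | h
      · rw [min_eq_right h, max_eq_right (one_le_inv_iff₀.2 ⟨hlα, h⟩)]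
        field_simp
      · rw [min_eq_left h, max_eq_left (inv_le_one_of_one_le₀ h)]
        ring
    have key2 : min 1 (l ^ α) * ρ (t ^ α) ≤ ρ (l ^ α * t ^ α) := by
      have hmn : 0 ≤ min 1 (l ^ α) := le_min zero_le_one hlα.le
      calc min 1 (l ^ α) * ρ (t ^ α)
          ≤ min 1 (l ^ α) * (max 1 (l ^ (-α)) * ρ (l ^ α * t ^ α)) :=
            mul_le_mul_of_nonneg_left key hmn
        _ = (min 1 (l ^ α) * max 1 (l ^ (-α))) * ρ (l ^ α * t ^ α) := by ring
        _ = ρ (l ^ α * t ^ α) := by rw [hminmax, one_mul]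
    have e1 : Φinv (l * t) = l ^ (1/p) * t ^ (1/p) * ρ (l ^ α * t ^ α) := by
      rw [hform _ hlt, Real.mul_rpow hl.le ht.le, Real.mul_rpow hl.le ht.le]
    have e2 : min (l ^ (1/p)) (l ^ (1/q)) = l ^ (1/p) * min 1 (l ^ α) := by
      rw [mul_min_of_nonneg _ _ (Real.rpow_pos_of_pos hl (1/p)).le, mul_one,
        ← Real.rpow_add hl]
      congr 2
      rw [hα]; ring
    rw [e1, e2, hform _ ht]
    have htp : 0 < t ^ (1/p) := Real.rpow_pos_of_pos ht _
    have hlp : 0 < l ^ (1/p) := Real.rpow_pos_of_pos hl _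
    calc l ^ (1/p) * min 1 (l ^ α) * (t ^ (1/p) * ρ (t ^ α))
        = (l ^ (1/p) * t ^ (1/p)) * (min 1 (l ^ α) * ρ (t ^ α)) := by ring
      _ ≤ (l ^ (1/p) * t ^ (1/p)) * ρ (l ^ α * t ^ α) :=
          mul_le_mul_of_nonneg_left key2 (mul_pos hlp htp).le
  -- Φinv strictly monotone on positives
  have invmono : ∀ a b : ℝ, 0 < a → a < b → Φinv a < Φinv b := by
    intro a b ha hab
    have hb : 0 < b := lt_trans ha hab
    have hl : 1 < b / a := (one_lt_div ha).2 hab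
    have hl0 : 0 < b / a := by linarith
    have h1 : 1 < (b/a) ^ (1/p) :=
      Real.one_lt_rpow_iff_of_pos hl0 |>.2 (Or.inl ⟨hl, by positivity⟩)
    have h2 : 1 < (b/a) ^ (1/q) :=
      Real.one_lt_rpow_iff_of_pos hl0 |>.2 (Or.inl ⟨hl, by positivity⟩)
    have := lemA (b/a) a hl0 ha
    rw [div_mul_cancel₀ _ ha.ne'] at this
    have hmin : 1 < min ((b/a) ^ (1/p)) ((b/a) ^ (1/q)) := lt_min h1 h2
    nlinarith [hΦinvpos a ha]
  -- Φ monotone on positives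
  have Φmono : ∀ a b : ℝ, 0 < a → a ≤ b → Φ a ≤ Φ b := by
    intro a b ha hab
    by_contra h
    push_neg at h
    have hb : 0 < b := lt_of_lt_of_le ha hab
    have := invmono (Φ b) (Φ a) (hΦpos b hb) h
    rw [hli a ha, hli b hb] at this
    linarith
  -- Claim 1
  have claim1 : ∀ s t : ℝ, 0 < s → 0 < t → Φ (s * t) ≤ max (s ^ p) (s ^ q) * Φ t := by
    intro s t hs ht
    set l := max (s ^ p) (s ^ q) with hldef
    have hl0 : 0 < l := lt_max_of_lt_left (Real.rpow_pos_of_pos hs p)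
    have hsp : s ≤ l ^ (1/p) := by
      have h1 : (s ^ p) ^ (1/p) ≤ l ^ (1/p) :=
        Real.rpow_le_rpow (Real.rpow_pos_of_pos hs p).le (le_max_left _ _) (by positivity)
      rwa [← Real.rpow_mul hs.le, mul_one_div_cancel hp0.ne', Real.rpow_one] at h1
    have hsq : s ≤ l ^ (1/q) := by
      have h1 : (s ^ q) ^ (1/q) ≤ l ^ (1/q) :=
        Real.rpow_le_rpow (Real.rpow_pos_of_pos hs q).le (le_max_right _ _) (by positivity)
      rwa [← Real.rpow_mul hs.le, mul_one_div_cancel hq0.ne', Real.rpow_one] at h1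
    have hΦtpos := hΦpos t ht
    have hA := lemA l (Φ t) hl0 hΦtpos
    rw [hli t ht] at hA
    have hst : s * t ≤ Φinv (l * Φ t) := by
      have : s * t ≤ min (l ^ (1/p)) (l ^ (1/q)) * t :=
        mul_le_mul_of_nonneg_right (le_min hsp hsq) ht.le
      linarith
    have := Φmono (s * t) (Φinv (l * Φ t)) (mul_pos hs ht) hst
    rwa [hri _ (mul_pos hl0 hΦtpos)] at this
  -- lower bound : Φ t ≥ Φ 1 * t^p for t ≥ 1
  have lower : ∀ t : ℝ, 1 ≤ t → Φ 1 * t ^ p ≤ Φ t := by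
    intro t ht
    have ht0 : 0 < t := lt_of_lt_of_le one_pos ht
    have hinv : 0 < t⁻¹ := inv_pos.2 ht0
    have h1 := claim1 t⁻¹ t hinv ht0
    rw [inv_mul_cancel₀ ht0.ne'] at h1
    have hmax : max (t⁻¹ ^ p) (t⁻¹ ^ q) = t⁻¹ ^ p := by
      apply max_eq_left
      exact Real.rpow_le_rpow_of_exponent_ge hinv (inv_le_one_of_one_le₀ ht) hpq.le
    rw [hmax] at h1
    have htp : 0 < t ^ p := Real.rpow_pos_of_pos ht0 p
    have hip : t⁻¹ ^ p = (t ^ p)⁻¹ := by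
      rw [← Real.rpow_neg_one t, ← Real.rpow_mul ht0.le, ← Real.rpow_neg ht0.le]
      ring_nf
    rw [hip] at h1
    have h2 : Φ 1 * t ^ p ≤ ((t ^ p)⁻¹ * Φ t) * t ^ p :=
      mul_le_mul_of_nonneg_right h1 htp.le
    have h3 : ((t ^ p)⁻¹ * Φ t) * t ^ p = Φ t := by field_simp
    linarith [h3 ▸ h2]
  -- bounded above
  have bdd : ∀ τ : ℝ, 0 < τ → BddAbove {x : ℝ | ∃ t : ℝ, 0 ≤ t ∧ x = τ * t - Φ t} := by
    intro τ hτ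
    have hΦ1 : 0 < Φ 1 := hΦpos 1 one_pos
    set T := max 1 ((τ / Φ 1) ^ (1/(p-1))) with hT
    have hT1 : 1 ≤ T := le_max_left _ _
    have hT0 : 0 < T := lt_of_lt_of_le one_pos hT1
    refine ⟨τ * T, ?_⟩
    rintro x ⟨t, ht0, rfl⟩
    have hΦtnn : 0 ≤ Φ t := by
      rcases eq_or_lt_of_le ht0 with h | h
      · simp [← h, hΦ0]
      · exact (hΦpos t h).le
    rcases le_or_gt t T with h | h
    · have : τ * t ≤ τ * T := mul_le_mul_of_nonneg_left h hτ.le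
      linarith
    · have ht1 : 1 ≤ t := le_of_lt (lt_of_le_of_lt hT1 h)
      have ht0' : 0 < t := lt_of_lt_of_le one_pos ht1
      have hlow := lower t ht1
      have hTp : τ / Φ 1 ≤ T ^ (p-1) := by
        have h1 : (τ / Φ 1) ^ (1/(p-1)) ≤ T := le_max_right _ _
        have h2 : ((τ / Φ 1) ^ (1/(p-1))) ^ (p-1) ≤ T ^ (p-1) :=
          Real.rpow_le_rpow (Real.rpow_pos_of_pos (by positivity) _).le h1 (by linarith)
        rwa [← Real.rpow_mul (by positivity), one_div_mul_cancel (by linarith : p - 1 ≠ 0),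
          Real.rpow_one] at h2
      have hTt : T ^ (p-1) ≤ t ^ (p-1) :=
        Real.rpow_le_rpow hT0.le h.le (by linarith)
      have hsplit : t ^ p = t * t ^ (p-1) := by
        nth_rewrite 1 [show p = 1 + (p-1) by ring]
        rw [Real.rpow_add ht0', Real.rpow_one]
      have hτt : τ * t ≤ Φ 1 * t ^ p := by
        rw [hsplit]
        have : τ ≤ Φ 1 * t ^ (p-1) := by
          have := le_trans hTp hTt
          calc τ = Φ 1 * (τ / Φ 1) := by field_simp
            _ ≤ Φ 1 * t ^ (p-1) := mul_le_mul_of_nonneg_left this hΦ1.le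
        nlinarith
      have : 0 ≤ τ * T := by positivity
      linarith
  -- nonempty / nonneg
  have mem0 : ∀ τ : ℝ, (0:ℝ) ∈ {x : ℝ | ∃ t : ℝ, 0 ≤ t ∧ x = τ * t - Φ t} :=
    fun τ => ⟨0, le_refl 0, by simp [hΦ0]⟩
  have Φtnn : ∀ τ : ℝ, 0 < τ → 0 ≤ Φt τ := by
    intro τ hτ
    rw [hΦt τ]
    exact le_csSup (bdd τ hτ) (mem0 τ)
  -- Claim 2
  have claim2 : ∀ s t : ℝ, 0 < s → 0 < t →
      Φt (s * t) ≤ max (s ^ (p / (p - 1))) (s ^ (q / (q - 1))) * Φt t := by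
    intro σ τ hσ hτ
    set l := max (σ ^ (p / (p - 1))) (σ ^ (q / (q - 1))) with hldef
    have hl0 : 0 < l := lt_max_of_lt_left (Real.rpow_pos_of_pos hσ _)
    have hfrac : ∀ r : ℝ, 1 < r → (σ / l) ^ r ≤ 1 / l → True := fun _ _ _ => trivial
    have hkey : ∀ r : ℝ, 1 < r → σ ^ (r / (r - 1)) ≤ l → (σ / l) ^ r ≤ 1 / l := by
      intro r hr hle
      have hr1 : (0:ℝ) < r - 1 := by linarith
      have hlr1 : σ ^ r ≤ l ^ (r - 1) := by
        have h2 : (σ ^ (r / (r-1))) ^ (r-1) ≤ l ^ (r-1) :=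
          Real.rpow_le_rpow (Real.rpow_pos_of_pos hσ _).le hle hr1.le
        rwa [← Real.rpow_mul hσ.le, div_mul_cancel₀ _ hr1.ne'] at h2
      have hdiv : (σ / l) ^ r = σ ^ r / l ^ r :=
        Real.div_rpow hσ.le hl0.le r
      rw [hdiv]
      have hlrpos : 0 < l ^ r := Real.rpow_pos_of_pos hl0 r
      have hdivle : σ ^ r / l ^ r ≤ l ^ (r-1) / l ^ r := by gcongr
      have he : l ^ (r-1) / l ^ r = 1 / l := by
        rw [← Real.rpow_sub hl0, show r - 1 - r = -1 by ring, Real.rpow_neg_one, one_div]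
      linarith [he ▸ hdivle]
    have hkp : (σ / l) ^ p ≤ 1 / l := hkey p hp (le_max_left _ _)
    have hkq : (σ / l) ^ q ≤ 1 / l := hkey q (by linarith) (le_max_right _ _)
    rw [hΦt (σ * τ)]
    apply csSup_le ⟨0, mem0 _⟩
    rintro x ⟨t, ht0, rfl⟩
    rcases eq_or_lt_of_le ht0 with h | h
    · have : σ * τ * t - Φ t = 0 := by simp [← h, hΦ0]
      rw [this]
      exact mul_nonneg hl0.le (Φtnn τ hτ)
    · have hu : 0 < σ * t / l := by positivity
      have hΦu : Φ (σ * t / l) ≤ (1 / l) * Φ t := by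
        have heq : σ * t / l = (σ / l) * t := by ring
        rw [heq]
        have h1 := claim1 (σ / l) t (by positivity) h
        have h2 : max ((σ/l) ^ p) ((σ/l) ^ q) ≤ 1 / l := max_le hkp hkq
        calc Φ ((σ/l) * t) ≤ max ((σ/l) ^ p) ((σ/l) ^ q) * Φ t := h1
          _ ≤ (1 / l) * Φ t := mul_le_mul_of_nonneg_right h2 (hΦpos t h).le
      have hmem : τ * (σ * t / l) - Φ (σ * t / l) ≤ Φt τ := by
        rw [hΦt τ]
        exact le_csSup (bdd τ hτ) ⟨σ * t / l, hu.le, rfl⟩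
      calc σ * τ * t - Φ t = l * (τ * (σ * t / l) - (1/l) * Φ t) := by
            field_simp
        _ ≤ l * (τ * (σ * t / l) - Φ (σ * t / l)) :=
            mul_le_mul_of_nonneg_left (by linarith) hl0.le
        _ ≤ l * Φt τ := mul_le_mul_of_nonneg_left hmem hl0.le
  refine ⟨claim1, claim2, ?_, ?_⟩
  · exact ⟨max (2 ^ p) (2 ^ q), lt_max_of_lt_left (Real.rpow_pos_of_pos two_pos p),
      fun t ht => claim1 2 t two_pos ht⟩
  · exact ⟨max ((2:ℝ) ^ (p/(p-1))) ((2:ℝ) ^ (q/(q-1))),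
      lt_max_of_lt_left (Real.rpow_pos_of_pos two_pos _),
      fun t ht => claim2 2 t two_pos ht⟩
end
end

section
/- Let Φ be of class 𝒫 with parameters 1 < p < q < ∞ and let Φ̃ be its complementary Young function. Then for all u, v > 0: (i) Φ⁻¹(uv) ≤ max(u^{1/p}, u^{1/q})·Φ⁻¹(v); (ii) min(u^{1/p}, u^{1/q})·Φ⁻¹(v) ≤ Φ⁻¹(uv); and (iii) min(u^{1/q'}, u^{1/p'})·Φ̃⁻¹(v) ≤ Φ̃⁻¹(uv), where p', q' are the Hölder conjugates of p, q. -/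
/-!
The representation `Φ⁻¹(t) = t^{1/p} ρ(t^{1/q-1/p})` and `ρ(st) ≤ max(1,s) ρ(t)` give (i) at
once, and (i) applied to `u⁻¹` and `uv` gives (ii). By (ii), `Φ⁻¹` is strictly increasing, hence
so is `Φ`, and applying `Φ` to (i) at `v = Φ t` yields `u Φ(t) ≤ Φ(max(u^{1/p}, u^{1/q}) t)`.
Substituting `t ↦ max(u^{1/p}, u^{1/q}) t` in the supremum defining `Φ̃` turns this into
`Φ̃(m s) ≤ u Φ̃(s)` with `m = u / max(u^{1/p}, u^{1/q}) = min(u^{1/q'}, u^{1/p'})`; taking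
`s = Φ̃⁻¹(v)` gives (iii), because `Φ̃` is nondecreasing and, having a left inverse, injective.
The growth `Φ(t) ≳ t^p` that also follows from the scaling inequality makes all the suprema
finite.
-/

open MeasureTheory Set Filter Topology ENNReal

noncomputable section

open Real

/-- `sSup` makes this `0` wherever the supremum is infinite. -/
def youngConj (Φ : ℝ → ℝ) (s : ℝ) : ℝ :=
  sSup {x : ℝ | ∃ t : ℝ, 0 ≤ t ∧ x = s * t - Φ t}

section youngConj

variable {Φ : ℝ → ℝ}

theorem le_youngConj {s t : ℝ} (hbdd : BddAbove {x : ℝ | ∃ t : ℝ, 0 ≤ t ∧ x = s * t - Φ t})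
    (ht : 0 ≤ t) : s * t - Φ t ≤ youngConj Φ s :=
  le_csSup hbdd ⟨t, ht, rfl⟩

theorem youngConj_le {s c : ℝ} (h : ∀ t, 0 ≤ t → s * t - Φ t ≤ c) : youngConj Φ s ≤ c :=
  csSup_le ⟨_, 0, le_rfl, rfl⟩ (by rintro _ ⟨t, ht, rfl⟩; exact h t ht)

theorem youngConj_le_youngConj {s₁ s₂ : ℝ}
    (hbdd : BddAbove {x : ℝ | ∃ t : ℝ, 0 ≤ t ∧ x = s₂ * t - Φ t}) (h : s₁ ≤ s₂) :
    youngConj Φ s₁ ≤ youngConj Φ s₂ :=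
  youngConj_le fun t ht =>
    calc s₁ * t - Φ t ≤ s₂ * t - Φ t := by gcongr
      _ ≤ youngConj Φ s₂ := le_youngConj hbdd ht

theorem strictMonoOn_youngConj {g : ℝ → ℝ}
    (hbdd : ∀ s, 0 < s → BddAbove {x : ℝ | ∃ t : ℝ, 0 ≤ t ∧ x = s * t - Φ t})
    (hg : LeftInvOn g (youngConj Φ) (Ioi 0)) : StrictMonoOn (youngConj Φ) (Ioi 0) :=
  MonotoneOn.strictMonoOn_of_injOn
    (fun _ _ _ hb hab => youngConj_le_youngConj (hbdd _ hb) hab) hg.injOn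

theorem youngConj_mul_div_le {s w l : ℝ} (hw : 0 ≤ w) (hl : 0 < l)
    (hΦ : ∀ t, 0 ≤ t → w * Φ t ≤ Φ (l * t))
    (hbdd : BddAbove {x : ℝ | ∃ t : ℝ, 0 ≤ t ∧ x = s * t - Φ t}) :
    youngConj Φ (w * s / l) ≤ w * youngConj Φ s := by
  refine youngConj_le fun t ht => ?_
  have ht' : 0 ≤ t / l := div_nonneg ht hl.le
  calc w * s / l * t - Φ t = w * s * (t / l) - Φ (l * (t / l)) := by
        rw [mul_div_cancel₀ _ hl.ne']; ring
    _ ≤ w * (s * (t / l) - Φ (t / l)) := by linarith [hΦ _ ht']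
    _ ≤ w * youngConj Φ s := by gcongr; exact le_youngConj hbdd ht'

theorem bddAbove_of_rpow_sub_one_le {s p C : ℝ} (hp : 1 < p) (hC : 0 < C)
    (hΦ : ∀ t, 0 ≤ t → (t / C) ^ p - 1 ≤ Φ t) (hs : 0 ≤ s) :
    BddAbove {x : ℝ | ∃ t : ℝ, 0 ≤ t ∧ x = s * t - Φ t} := by
  refine ⟨(s * C) ^ p.conjExponent / p.conjExponent + 1, ?_⟩
  rintro _ ⟨t, ht, rfl⟩
  have hyoung := young_inequality_of_nonneg (div_nonneg ht hC.le) (mul_nonneg hs hC.le)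
    (HolderConjugate.conjExponent hp)
  have hdiv : (t / C) ^ p / p ≤ (t / C) ^ p := div_le_self (by positivity) hp.le
  have hprod : t / C * (s * C) = s * t := by field_simp
  linarith [hΦ t ht]

end youngConj

theorem div_max_rpow {u : ℝ} (hu : 0 < u) (a b : ℝ) :
    u / max (u ^ a) (u ^ b) = min (u ^ (1 - a)) (u ^ (1 - b)) := by
  rw [div_eq_mul_inv, antitoneOn_inv_pos.map_max (rpow_pos_of_pos hu a) (rpow_pos_of_pos hu b),
    mul_min_of_nonneg _ _ hu.le, rpow_sub hu, rpow_sub hu, Real.rpow_one, div_eq_mul_inv,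
    div_eq_mul_inv]

namespace IsClassP

variable {Φ Φinv : ℝ → ℝ} {p q : ℝ}

theorem one_lt_p (hΦ : IsClassP Φ Φinv p q) : 1 < p := hΦ.1

theorem p_lt_q (hΦ : IsClassP Φ Φinv p q) : p < q := hΦ.2.1

theorem apply_pos (hΦ : IsClassP Φ Φinv p q) {t : ℝ} (ht : 0 < t) : 0 < Φ t := hΦ.2.2.1 t ht

theorem inv_apply_pos (hΦ : IsClassP Φ Φinv p q) {t : ℝ} (ht : 0 < t) : 0 < Φinv t :=
  hΦ.2.2.2.1 t ht

theorem inv_apply_apply (hΦ : IsClassP Φ Φinv p q) {t : ℝ} (ht : 0 < t) : Φinv (Φ t) = t :=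
  hΦ.2.2.2.2.1 t ht

theorem apply_inv_apply (hΦ : IsClassP Φ Φinv p q) {t : ℝ} (ht : 0 < t) : Φ (Φinv t) = t :=
  hΦ.2.2.2.2.2.1 t ht

theorem inv_mul_le_max_rpow_mul (hΦ : IsClassP Φ Φinv p q) {u v : ℝ} (hu : 0 < u)
    (hv : 0 < v) :
    Φinv (u * v) ≤ max (u ^ (1/p)) (u ^ (1/q)) * Φinv v := by
  obtain ⟨-, -, -, -, -, -, ρ, -, -, -, hρscale, hrep⟩ := hΦ
  rw [hrep _ (mul_pos hu hv), hrep _ hv, mul_rpow hu.le hv.le, mul_rpow hu.le hv.le]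
  have hmax : u ^ (1/p) * max 1 (u ^ (1/q - 1/p)) = max (u ^ (1/p)) (u ^ (1/q)) := by
    rw [mul_max_of_nonneg _ _ (by positivity), mul_one, ← rpow_add hu]
    ring_nf
  calc u ^ (1/p) * v ^ (1/p) * ρ (u ^ (1/q - 1/p) * v ^ (1/q - 1/p))
      ≤ u ^ (1/p) * v ^ (1/p) * (max 1 (u ^ (1/q - 1/p)) * ρ (v ^ (1/q - 1/p))) := by
        gcongr; exact hρscale _ _ (by positivity) (by positivity)
    _ = _ := by rw [← hmax]; ring

theorem min_rpow_mul_inv_le_inv_mul (hΦ : IsClassP Φ Φinv p q) {u v : ℝ} (hu : 0 < u) (hv : 0 < v) :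
    min (u ^ (1/p)) (u ^ (1/q)) * Φinv v ≤ Φinv (u * v) := by
  have h := hΦ.inv_mul_le_max_rpow_mul (inv_pos.2 hu) (mul_pos hu hv)
  rw [inv_mul_cancel_left₀ hu.ne', inv_rpow hu.le, inv_rpow hu.le,
    ← antitoneOn_inv_pos.map_min (rpow_pos_of_pos hu _) (rpow_pos_of_pos hu _)] at h
  rwa [le_inv_mul_iff₀ (by positivity)] at h

theorem strictMonoOn_inv (hΦ : IsClassP Φ Φinv p q) : StrictMonoOn Φinv (Ioi 0) := by
  intro a ha b hb hab
  have hp : 0 < p := zero_lt_one.trans hΦ.one_lt_p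
  have hq : 0 < q := hp.trans hΦ.p_lt_q
  have hu : 1 < b / a := (one_lt_div ha).2 hab
  have hmin : 1 < min ((b / a) ^ (1/p)) ((b / a) ^ (1/q)) :=
    lt_min (one_lt_rpow hu (by positivity)) (one_lt_rpow hu (by positivity))
  calc Φinv a < min ((b / a) ^ (1/p)) ((b / a) ^ (1/q)) * Φinv a :=
        lt_mul_of_one_lt_left (hΦ.inv_apply_pos ha) hmin
    _ ≤ Φinv (b / a * a) := hΦ.min_rpow_mul_inv_le_inv_mul (by positivity) ha
    _ = Φinv b := by rw [div_mul_cancel₀ _ (ne_of_gt ha)]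

theorem apply_le_apply_iff (hΦ : IsClassP Φ Φinv p q) {a b : ℝ} (ha : 0 < a) (hb : 0 < b) :
    Φ a ≤ Φ b ↔ a ≤ b := by
  rw [← hΦ.strictMonoOn_inv.le_iff_le (hΦ.apply_pos ha) (hΦ.apply_pos hb),
    hΦ.inv_apply_apply ha, hΦ.inv_apply_apply hb]

theorem mul_apply_le_apply_max_mul (hΦ : IsClassP Φ Φinv p q) {u t : ℝ} (hu : 0 < u)
    (ht : 0 < t) : u * Φ t ≤ Φ (max (u ^ (1/p)) (u ^ (1/q)) * t) := by
  have huΦ : 0 < u * Φ t := mul_pos hu (hΦ.apply_pos ht)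
  have h := hΦ.inv_mul_le_max_rpow_mul hu (hΦ.apply_pos ht)
  rw [hΦ.inv_apply_apply ht, ← hΦ.apply_le_apply_iff (hΦ.inv_apply_pos huΦ) (by positivity),
    hΦ.apply_inv_apply huΦ] at h
  exact h

theorem rpow_sub_one_le (hΦ : IsClassP Φ Φinv p q) (hΦ0 : Φ 0 = 0) {t : ℝ} (ht : 0 ≤ t) :
    (t / Φinv 1) ^ p - 1 ≤ Φ t := by
  set C := Φinv 1
  have hC : 0 < C := hΦ.inv_apply_pos one_pos
  have hp : 0 < p := zero_lt_one.trans hΦ.one_lt_p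
  rcases le_total t C with htC | hCt
  · have hle : (t / C) ^ p ≤ 1 := rpow_le_one (by positivity) ((div_le_one hC).2 htC) hp.le
    have hnonneg : 0 ≤ Φ t := by
      rcases ht.eq_or_lt with rfl | ht
      exacts [hΦ0.ge, (hΦ.apply_pos ht).le]
    linarith
  · set u := (t / C) ^ p
    have hu1 : 1 ≤ u := one_le_rpow ((one_le_div hC).2 hCt) hp.le
    have hmax : max (u ^ (1/p)) (u ^ (1/q)) = t / C := by
      rw [max_eq_left (rpow_le_rpow_of_exponent_le hu1
        (one_div_le_one_div_of_le hp hΦ.p_lt_q.le)), one_div, rpow_rpow_inv (by positivity)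
        hp.ne']
    have h := hΦ.mul_apply_le_apply_max_mul (zero_lt_one.trans_le hu1) hC
    rw [hmax, div_mul_cancel₀ _ hC.ne', hΦ.apply_inv_apply one_pos, mul_one] at h
    linarith

theorem bddAbove_mul_sub (hΦ : IsClassP Φ Φinv p q) (hΦ0 : Φ 0 = 0) {s : ℝ} (hs : 0 ≤ s) :
    BddAbove {x : ℝ | ∃ t : ℝ, 0 ≤ t ∧ x = s * t - Φ t} :=
  bddAbove_of_rpow_sub_one_le hΦ.one_lt_p (hΦ.inv_apply_pos one_pos)
    (fun _ ht => hΦ.rpow_sub_one_le hΦ0 ht) hs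

theorem youngConj_min_mul_le (hΦ : IsClassP Φ Φinv p q) (hΦ0 : Φ 0 = 0) {u s : ℝ}
    (hu : 0 < u) (hs : 0 < s) :
    youngConj Φ (min (u ^ (1 - 1/q)) (u ^ (1 - 1/p)) * s) ≤ u * youngConj Φ s := by
  have hscale : ∀ t, 0 ≤ t → u * Φ t ≤ Φ (max (u ^ (1/p)) (u ^ (1/q)) * t) := by
    intro t ht
    rcases ht.eq_or_lt with rfl | ht
    · simp [hΦ0]
    · exact hΦ.mul_apply_le_apply_max_mul hu ht
  have h := youngConj_mul_div_le hu.le (by positivity) hscale (hΦ.bddAbove_mul_sub hΦ0 hs.le)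
  rwa [mul_div_right_comm, div_max_rpow hu, min_comm] at h

end IsClassP

/-- for `Φ` of class `𝒫` with parameters `1 < p < q`, its inverse and the
inverse of the complementary Young function `Φ̃` satisfy, for all `u,v > 0`:
`Φ⁻¹(uv) ≤ max(u^{1/p}, u^{1/q})·Φ⁻¹(v)`, `min(u^{1/p}, u^{1/q})·Φ⁻¹(v) ≤ Φ⁻¹(uv)` and
`min(u^{1/q'}, u^{1/p'})·Φ̃⁻¹(v) ≤ Φ̃⁻¹(uv)`, where `1/p' = 1 − 1/p`, `1/q' = 1 − 1/q`. -/
theorem class_P_inverse_estimates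
    (Φ Φinv Φt Φtinv : ℝ → ℝ) (p q : ℝ) (hΦ : IsClassP Φ Φinv p q)
    (hΦ0 : Φ 0 = 0)
    (hΦt : ∀ s : ℝ, Φt s = sSup {x : ℝ | ∃ t : ℝ, 0 ≤ t ∧ x = s * t - Φ t})
    (hΦtinvpos : ∀ s : ℝ, 0 < s → 0 < Φtinv s)
    (hΦtinv1 : ∀ t : ℝ, 0 < t → Φtinv (Φt t) = t)
    (hΦtinv2 : ∀ s : ℝ, 0 < s → Φt (Φtinv s) = s) :
    ∀ u v : ℝ, 0 < u → 0 < v →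
      Φinv (u * v) ≤ max (u ^ (1/p)) (u ^ (1/q)) * Φinv v ∧
      min (u ^ (1/p)) (u ^ (1/q)) * Φinv v ≤ Φinv (u * v) ∧
      min (u ^ (1 - 1/q)) (u ^ (1 - 1/p)) * Φtinv v ≤ Φtinv (u * v) := by
  intro u v hu hv
  refine ⟨hΦ.inv_mul_le_max_rpow_mul hu hv, hΦ.min_rpow_mul_inv_le_inv_mul hu hv, ?_⟩
  obtain rfl : Φt = youngConj Φ := funext hΦt
  have huv : 0 < u * v := mul_pos hu hv
  have hmono : StrictMonoOn (youngConj Φ) (Ioi 0) :=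
    strictMonoOn_youngConj (fun _ hs => hΦ.bddAbove_mul_sub hΦ0 hs.le) hΦtinv1
  have hscale : youngConj Φ (min (u ^ (1 - 1/q)) (u ^ (1 - 1/p)) * Φtinv v) ≤
      youngConj Φ (Φtinv (u * v)) :=
    calc _ ≤ u * youngConj Φ (Φtinv v) := hΦ.youngConj_min_mul_le hΦ0 hu (hΦtinvpos v hv)
      _ = youngConj Φ (Φtinv (u * v)) := by rw [hΦtinv2 v hv, hΦtinv2 _ huv]
  have hpos : 0 < min (u ^ (1 - 1/q)) (u ^ (1 - 1/p)) * Φtinv v :=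
    mul_pos (lt_min (rpow_pos_of_pos hu _) (rpow_pos_of_pos hu _)) (hΦtinvpos v hv)
  exact (hmono.le_iff_le hpos (hΦtinvpos _ huv)).1 hscale
end
end

section
/- Let S = { z ∈ ℂ \ {0} : |arg z| < π/3 } and let Log denote the principal branch of the complex logarithm. Then for every z ∈ S one has (1/4)·log(1 + |z|) ≤ |Log(1 + z)|, and there exists a constant m₁ > 0 such that |Log(1 + z)| ≤ m₁·log(1 + |z|) for all z ∈ S. -/
/-!
On the sector `|arg z| ≤ π/3` one has `Re z ≥ |z|/2`. Hence `|1 + z|² ≥ 1 + |z|`, so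
`log (1 + |z|) ≤ 2 Re Log (1 + z)`, which gives the lower bound. For the upper bound,
`1 ≤ |1 + z| ≤ 1 + |z|` controls the real part of `Log (1 + z)`, and Jordan's inequality
bounds its imaginary part `arg (1 + z)` by `(π/2)·|z|/|1 + z| ≤ π·|z|/(1 + |z|) ≤ π·log (1 + |z|)`.
-/

open Complex

lemma Real.div_one_add_le_log_one_add {t : ℝ} (ht : 0 ≤ t) : t / (1 + t) ≤ Real.log (1 + t) := by
  have h := Real.one_sub_inv_le_log_of_pos (x := 1 + t) (by positivity)
  calc t / (1 + t) = 1 - (1 + t)⁻¹ := by field_simp; ring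
    _ ≤ Real.log (1 + t) := h

namespace Complex

variable {z w : ℂ}

lemma norm_div_two_le_re_of_abs_arg_le (h : |arg z| ≤ Real.pi / 3) : ‖z‖ / 2 ≤ z.re := by
  have hcos : 1 / 2 ≤ Real.cos (arg z) := by
    rw [← Real.cos_abs, ← Real.cos_pi_div_three]
    exact Real.cos_le_cos_of_nonneg_of_le_pi (abs_nonneg _) (by linarith [Real.pi_pos]) h
  rw [← norm_mul_cos_arg]
  nlinarith [norm_nonneg z]

lemma abs_arg_le_pi_div_two_mul_abs_im_div_norm (h : 0 ≤ w.re) :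
    |arg w| ≤ Real.pi / 2 * (|w.im| / ‖w‖) := by
  have hjordan := Real.mul_abs_le_abs_sin (abs_arg_le_pi_div_two_iff.2 h)
  rw [sin_arg, abs_div, abs_norm] at hjordan
  calc |arg w| = Real.pi / 2 * (2 / Real.pi * |arg w|) := by field_simp
    _ ≤ Real.pi / 2 * (|w.im| / ‖w‖) := by gcongr

section HalfNormLeRe

variable (h : ‖z‖ / 2 ≤ z.re)
include h

lemma one_add_norm_le_norm_one_add_sq : 1 + ‖z‖ ≤ ‖1 + z‖ ^ 2 := by
  have hsq : ‖1 + z‖ ^ 2 = (1 + z.re) ^ 2 + z.im ^ 2 := by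
    rw [Complex.sq_norm, normSq_apply]; simp only [add_re, one_re, add_im, one_im]; ring
  have hnorm : ‖z‖ ^ 2 = z.re ^ 2 + z.im ^ 2 := by
    rw [Complex.sq_norm, normSq_apply]; ring
  nlinarith [norm_nonneg z]

lemma log_one_add_norm_le_two_mul_norm_log_one_add :
    Real.log (1 + ‖z‖) ≤ 2 * ‖log (1 + z)‖ :=
  calc Real.log (1 + ‖z‖) ≤ Real.log (‖1 + z‖ ^ 2) :=
        Real.log_le_log (by positivity) (one_add_norm_le_norm_one_add_sq h)
    _ = 2 * (log (1 + z)).re := by rw [Real.log_pow, log_re]; push_cast; ring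
    _ ≤ 2 * ‖log (1 + z)‖ := by gcongr; exact re_le_norm _

lemma one_add_norm_div_two_le_re_one_add : (1 + ‖z‖) / 2 ≤ (1 + z).re := by
  simp only [add_re, one_re]; linarith

lemma abs_arg_one_add_le : |arg (1 + z)| ≤ Real.pi * Real.log (1 + ‖z‖) := by
  have hre := one_add_norm_div_two_le_re_one_add h
  have hratio : |(1 + z).im| / ‖1 + z‖ ≤ ‖z‖ / ((1 + ‖z‖) / 2) := by
    refine div_le_div₀ (norm_nonneg z) ?_ (by positivity) (hre.trans (re_le_norm _))
    simpa using abs_im_le_norm z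
  calc |arg (1 + z)| ≤ Real.pi / 2 * (|(1 + z).im| / ‖1 + z‖) :=
        abs_arg_le_pi_div_two_mul_abs_im_div_norm (by linarith [norm_nonneg z])
    _ ≤ Real.pi / 2 * (‖z‖ / ((1 + ‖z‖) / 2)) := by gcongr
    _ = Real.pi * (‖z‖ / (1 + ‖z‖)) := by field_simp
    _ ≤ Real.pi * Real.log (1 + ‖z‖) := by
        gcongr; exact Real.div_one_add_le_log_one_add (norm_nonneg z)

lemma norm_log_one_add_le_mul_log_one_add_norm : ‖log (1 + z)‖ ≤ (1 + Real.pi) * Real.log (1 + ‖z‖) := by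
  have hone : 1 ≤ ‖1 + z‖ := by
    refine le_trans ?_ (re_le_norm (1 + z))
    simp only [add_re, one_re]
    linarith [norm_nonneg z]
  calc ‖log (1 + z)‖ ≤ |(log (1 + z)).re| + |(log (1 + z)).im| := norm_le_abs_re_add_abs_im _
    _ = Real.log ‖1 + z‖ + |arg (1 + z)| := by
        rw [log_re, log_im, abs_of_nonneg (Real.log_nonneg hone)]
    _ ≤ Real.log (1 + ‖z‖) + Real.pi * Real.log (1 + ‖z‖) := by
        gcongr
        · simpa using norm_add_le 1 z
        · exact abs_arg_one_add_le h
    _ = (1 + Real.pi) * Real.log (1 + ‖z‖) := by ring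

end HalfNormLeRe

end Complex

/-- on the sector `S = {z ≠ 0 : |arg z| < π/3}`, the principal logarithm
satisfies `(1/4)·log(1+|z|) ≤ |Log(1+z)|`, and `|Log(1+z)| ≤ m₁·log(1+|z|)` for some
constant `m₁ > 0`. -/
theorem log_comparable_on_sector :
    (∀ z : ℂ, z ≠ 0 → |z.arg| < Real.pi / 3 →
      (1/4) * Real.log (1 + ‖z‖) ≤ ‖Complex.log (1 + z)‖) ∧
    ∃ m₁ : ℝ, 0 < m₁ ∧ ∀ z : ℂ, z ≠ 0 → |z.arg| < Real.pi / 3 →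
      ‖Complex.log (1 + z)‖ ≤ m₁ * Real.log (1 + ‖z‖) := by
  have hsector (z : ℂ) (harg : |z.arg| < Real.pi / 3) : ‖z‖ / 2 ≤ z.re :=
    norm_div_two_le_re_of_abs_arg_le harg.le
  refine ⟨fun z _ harg => ?_, 1 + Real.pi, by positivity,
    fun z _ harg => norm_log_one_add_le_mul_log_one_add_norm (hsector z harg)⟩
  have hlower := log_one_add_norm_le_two_mul_norm_log_one_add (hsector z harg)
  have hnonneg : 0 ≤ Real.log (1 + ‖z‖) := Real.log_nonneg (by simp)
  linarith
end

section
/- Let Ψ be a Young function. For s > 0 define N(s) = inf{ k > 0 : ∫₀^∞ Ψ(e^{−st}/k) dt ≤ 1 } (the Luxemburg norm of t ↦ e^{−st} on (0,∞)). Then N(s) ≤ 1/Ψ⁻¹(s) for every s > 0, i.e. Ψ⁻¹(s) ≤ 1/N(s). If, in addition, Ψ satisfies the Δ₂-condition globally with a constant K > 1, i.e. Ψ(2x) ≤ K·Ψ(x) for all x > 0, then with c = min{1, 1/(K·log K)} one has c·(1/N(s)) ≤ Ψ⁻¹(s) ≤ 1/N(s) for every s > 0. -/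
/-!
The admissible `k = 1 / Ψ⁻¹(s)` witnesses the upper bound: by convexity
`Ψ(e^{-st} Ψ⁻¹(s)) ≤ s e^{-st}`, whose integral is `1`. For the lower bounds, let `k` be
admissible. Restricting the integral to `(0, 1/s]` gives `Ψ(e⁻¹/k) ≤ s`, so `N(s) > 0`.
Under `Δ₂`, on the block where `e^{-st} ∈ [2^{-n-1}, 2^{-n}]` the integrand is at least
`(2/K)^{n+1} Ψ(1/k) e^{-st}`; summing the blocks gives `Ψ(1/k) ≤ (K - 1) s`. Since
`log K ≥ 1 - 1/K`, `c (K - 1) ≤ 1`, and convexity yields `Ψ(c/k) ≤ s`, i.e. `c/k ≤ Ψ⁻¹(s)`.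
-/

open MeasureTheory Set Filter Topology ENNReal

noncomputable section

/-- The Luxemburg norm of `t ↦ e^{−st}` on `(0,∞)` with respect to the Young
function `Ψ`: `N(s) = inf{ k > 0 : ∫₀^∞ Ψ(e^{−st}/k) dt ≤ 1 }`. -/
def expLuxNorm (Ψ : ℝ → ℝ) (s : ℝ) : ℝ :=
  sInf {k : ℝ | 0 < k ∧
    ∫⁻ t in Set.Ioi (0:ℝ), ENNReal.ofReal (Ψ (Real.exp (-(s * t)) / k)) ≤ 1}

lemma apply_two_pow_mul_le_of_delta2 {Ψ : ℝ → ℝ} {K : ℝ} (hK : 0 ≤ K)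
    (hΔ : ∀ x : ℝ, 0 < x → Ψ (2 * x) ≤ K * Ψ x) (n : ℕ) {x : ℝ} (hx : 0 < x) :
    Ψ (2 ^ n * x) ≤ K ^ n * Ψ x := by
  induction n with
  | zero => simp
  | succ n ih =>
    calc Ψ (2 ^ (n + 1) * x) = Ψ (2 * (2 ^ n * x)) := by ring_nf
      _ ≤ K * Ψ (2 ^ n * x) := hΔ _ (by positivity)
      _ ≤ K * (K ^ n * Ψ x) := mul_le_mul_of_nonneg_left ih hK
      _ = K ^ (n + 1) * Ψ x := by ring

section ExpIntegrals

variable {s : ℝ}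

lemma integrableOn_exp_neg_mul_Ioi (hs : 0 < s) (a : ℝ) :
    IntegrableOn (fun t => Real.exp (-(s * t))) (Ioi a) := by
  simpa only [neg_mul] using integrableOn_exp_mul_Ioi (neg_lt_zero.2 hs) a

lemma integral_exp_neg_mul_Ioi (hs : 0 < s) (a : ℝ) :
    ∫ t in Ioi a, Real.exp (-(s * t)) = Real.exp (-(s * a)) / s := by
  simp_rw [← neg_mul]
  rw [integral_exp_mul_Ioi (neg_lt_zero.2 hs), neg_div_neg_eq]

lemma lintegral_exp_neg_mul_Ioi (hs : 0 < s) (a : ℝ) :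
    ∫⁻ t in Ioi a, ENNReal.ofReal (Real.exp (-(s * t))) =
      ENNReal.ofReal (Real.exp (-(s * a)) / s) := by
  rw [← ofReal_integral_eq_lintegral_ofReal (integrableOn_exp_neg_mul_Ioi hs a)
    (ae_of_all _ fun t => (Real.exp_pos _).le), integral_exp_neg_mul_Ioi hs]

lemma lintegral_exp_neg_mul_Ioc (hs : 0 < s) {a b : ℝ} (hab : a ≤ b) :
    ∫⁻ t in Ioc a b, ENNReal.ofReal (Real.exp (-(s * t))) =
      ENNReal.ofReal ((Real.exp (-(s * a)) - Real.exp (-(s * b))) / s) := by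
  have hint := integrableOn_exp_neg_mul_Ioi hs a
  rw [← ofReal_integral_eq_lintegral_ofReal (hint.mono_set Ioc_subset_Ioi_self)
    (ae_of_all _ fun t => (Real.exp_pos _).le), ← intervalIntegral.integral_of_le hab,
    ← intervalIntegral.integral_Ioi_sub_Ioi hint hab, integral_exp_neg_mul_Ioi hs,
    integral_exp_neg_mul_Ioi hs, sub_div]

end ExpIntegrals

def expModular (Ψ : ℝ → ℝ) (s k : ℝ) : ℝ≥0∞ :=
  ∫⁻ t in Ioi 0, ENNReal.ofReal (Ψ (Real.exp (-(s * t)) / k))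

lemma expLuxNorm_le {Ψ : ℝ → ℝ} {s k : ℝ} (hk : 0 < k) (h : expModular Ψ s k ≤ 1) :
    expLuxNorm Ψ s ≤ k :=
  csInf_le ⟨0, fun _ hk => hk.1.le⟩ ⟨hk, h⟩

namespace IsYoungFunction

variable {Ψ : ℝ → ℝ}

lemma pos (hΨ : IsYoungFunction Ψ) {t : ℝ} (ht : 0 < t) : 0 < Ψ t := hΨ.2.2.2.1 t ht

lemma tendsto_nhdsGT_zero (hΨ : IsYoungFunction Ψ) : Tendsto Ψ (𝓝[>] 0) (𝓝 0) := by
  have h := hΨ.2.2.2.2.1.mul (tendsto_nhdsWithin_of_tendsto_nhds (tendsto_id (x := 𝓝 (0 : ℝ))))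
  rw [mul_zero] at h
  refine h.congr' ?_
  filter_upwards [self_mem_nhdsWithin] with t (ht : 0 < t)
  exact div_mul_cancel₀ _ ht.ne'

/-- Convexity together with `Ψ(0+) = 0`: secants from `0` have increasing slopes. -/
lemma monotoneOn_div (hΨ : IsYoungFunction Ψ) : MonotoneOn (fun t => Ψ t / t) (Ioi 0) := by
  have hlim : ∀ x : ℝ, 0 < x →
      Tendsto (fun ε => (Ψ x - Ψ ε) / (x - ε)) (𝓝[>] 0) (𝓝 (Ψ x / x)) := by
    intro x hx
    have hden : Tendsto (fun ε : ℝ => x - ε) (𝓝[>] 0) (𝓝 (x - 0)) :=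
      tendsto_nhdsWithin_of_tendsto_nhds (tendsto_const_nhds.sub tendsto_id)
    have h := ((tendsto_const_nhds (x := Ψ x)).sub hΨ.tendsto_nhdsGT_zero).div hden
      (by simpa using hx.ne')
    rwa [sub_zero, sub_zero] at h
  intro a (ha : 0 < a) b (hb : 0 < b) hab
  refine le_of_tendsto_of_tendsto (hlim a ha) (hlim b hb) ?_
  filter_upwards [Ioo_mem_nhdsGT ha] with ε hε
  exact hΨ.2.2.1.secant_mono hε.1 ha hb hε.2.ne' (hε.2.trans_le hab).ne' hab

lemma apply_mul_le (hΨ : IsYoungFunction Ψ) {c x : ℝ} (hx : 0 < x) (hc₀ : 0 < c)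
    (hc₁ : c ≤ 1) : Ψ (c * x) ≤ c * Ψ x := by
  have h := hΨ.monotoneOn_div (mul_pos hc₀ hx) hx (mul_le_of_le_one_left hx.le hc₁)
  simp only [div_le_div_iff₀ (mul_pos hc₀ hx) hx] at h
  nlinarith

lemma mul_le_apply_mul (hΨ : IsYoungFunction Ψ) {c x : ℝ} (hx : 0 < x) (hc : 1 ≤ c) :
    c * Ψ x ≤ Ψ (c * x) := by
  have hcx : 0 < c * x := by positivity
  have h := hΨ.monotoneOn_div hx hcx (le_mul_of_one_le_left hx.le hc)
  simp only [div_le_div_iff₀ hx hcx] at h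
  nlinarith

/-- Halving the argument `n` times costs at most `K ^ n` (`Δ₂`), convexity handles the rest. -/
lemma pow_mul_le_apply_mul_of_delta2 (hΨ : IsYoungFunction Ψ) {K : ℝ} (hK : 0 < K)
    (hΔ : ∀ x : ℝ, 0 < x → Ψ (2 * x) ≤ K * Ψ x) (n : ℕ) {x u : ℝ} (hx : 0 < x)
    (hu : ((2 : ℝ) ^ n)⁻¹ ≤ u) : (2 / K) ^ n * Ψ x * u ≤ Ψ (u * x) := by
  have h2n : (0 : ℝ) < 2 ^ n := by positivity
  have hu₀ : 0 ≤ u := (inv_pos.2 h2n).le.trans hu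
  have hμ : 1 ≤ u * 2 ^ n := by
    simpa only [inv_mul_cancel₀ h2n.ne'] using mul_le_mul_of_nonneg_right hu h2n.le
  have hx' : 0 < x / 2 ^ n := by positivity
  have hdouble := apply_two_pow_mul_le_of_delta2 hK.le hΔ n hx'
  rw [mul_div_cancel₀ x h2n.ne'] at hdouble
  calc (2 / K) ^ n * Ψ x * u ≤ (2 / K) ^ n * (K ^ n * Ψ (x / 2 ^ n)) * u := by gcongr
    _ = u * 2 ^ n * Ψ (x / 2 ^ n) := by rw [div_pow]; field_simp
    _ ≤ Ψ (u * 2 ^ n * (x / 2 ^ n)) := hΨ.mul_le_apply_mul hx' hμ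
    _ = Ψ (u * x) := by rw [mul_assoc, mul_div_cancel₀ x h2n.ne']

lemma expModular_apply_one_div_le_one (hΨ : IsYoungFunction Ψ) {y : ℝ} (hy : 0 < y) :
    expModular Ψ (Ψ y) (1 / y) ≤ 1 := by
  set s := Ψ y
  have hs : 0 < s := hΨ.pos hy
  calc expModular Ψ s (1 / y)
      ≤ ∫⁻ t in Ioi 0, ENNReal.ofReal s * ENNReal.ofReal (Real.exp (-(s * t))) := by
        refine setLIntegral_mono' measurableSet_Ioi fun t (ht : 0 < t) => ?_
        rw [← ENNReal.ofReal_mul hs.le, one_div, div_inv_eq_mul, mul_comm s (Real.exp _)]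
        exact ENNReal.ofReal_le_ofReal <| hΨ.apply_mul_le hy (Real.exp_pos _)
          (Real.exp_le_one_iff.2 (neg_nonpos.2 (mul_pos hs ht).le))
    _ = 1 := by
        rw [lintegral_const_mul' _ _ ENNReal.ofReal_ne_top, lintegral_exp_neg_mul_Ioi hs,
          mul_zero, neg_zero, Real.exp_zero, ← ENNReal.ofReal_mul hs.le, mul_one_div_cancel hs.ne',
          ENNReal.ofReal_one]

lemma ofReal_mul_apply_le_expModular (hΨ : IsYoungFunction Ψ) {s k t₀ : ℝ} (hs : 0 ≤ s)
    (hk : 0 < k) (ht₀ : 0 < t₀) :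
    ENNReal.ofReal (t₀ * Ψ (Real.exp (-(s * t₀)) / k)) ≤ expModular Ψ s k := by
  calc ENNReal.ofReal (t₀ * Ψ (Real.exp (-(s * t₀)) / k))
      = ∫⁻ _ in Ioc 0 t₀, ENNReal.ofReal (Ψ (Real.exp (-(s * t₀)) / k)) := by
        rw [setLIntegral_const, Real.volume_Ioc, sub_zero, ← ENNReal.ofReal_mul' ht₀.le, mul_comm]
    _ ≤ ∫⁻ t in Ioc 0 t₀, ENNReal.ofReal (Ψ (Real.exp (-(s * t)) / k)) := by
        refine setLIntegral_mono' measurableSet_Ioc fun t ht => ENNReal.ofReal_le_ofReal ?_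
        refine hΨ.1.monotoneOn (mem_Ioi.2 (by positivity)) (mem_Ioi.2 (by positivity)) ?_
        gcongr
        exact ht.2
    _ ≤ expModular Ψ s k := lintegral_mono_set Ioc_subset_Ioi_self

lemma ofReal_le_lintegral_Ioc_of_delta2 (hΨ : IsYoungFunction Ψ) {K s k : ℝ} (hK : 0 < K)
    (hΔ : ∀ x : ℝ, 0 < x → Ψ (2 * x) ≤ K * Ψ x) (hs : 0 < s) (hk : 0 < k) {n : ℕ} {a b : ℝ}
    (hab : a ≤ b) (ha : Real.exp (-(s * a)) = (2 ^ n)⁻¹)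
    (hb : Real.exp (-(s * b)) = (2 ^ (n + 1))⁻¹) :
    ENNReal.ofReal (Ψ (1 / k) / s * K⁻¹ ^ (n + 1)) ≤
      ∫⁻ t in Ioc a b, ENNReal.ofReal (Ψ (Real.exp (-(s * t)) / k)) := by
  have hC : 0 ≤ (2 / K) ^ (n + 1) * Ψ (1 / k) := by
    have := hΨ.pos (one_div_pos.2 hk); positivity
  calc ENNReal.ofReal (Ψ (1 / k) / s * K⁻¹ ^ (n + 1))
      = ENNReal.ofReal ((2 / K) ^ (n + 1) * Ψ (1 / k)) *
          ENNReal.ofReal ((Real.exp (-(s * a)) - Real.exp (-(s * b))) / s) := by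
        rw [← ENNReal.ofReal_mul hC, ha, hb]
        congr 1
        field_simp
        ring
    _ = ∫⁻ t in Ioc a b, ENNReal.ofReal ((2 / K) ^ (n + 1) * Ψ (1 / k) * Real.exp (-(s * t))) := by
        simp_rw [ENNReal.ofReal_mul hC]
        rw [lintegral_const_mul' _ _ ENNReal.ofReal_ne_top, lintegral_exp_neg_mul_Ioc hs hab]
    _ ≤ ∫⁻ t in Ioc a b, ENNReal.ofReal (Ψ (Real.exp (-(s * t)) / k)) := by
        refine setLIntegral_mono' measurableSet_Ioc fun t ht => ENNReal.ofReal_le_ofReal ?_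
        have hu : ((2 : ℝ) ^ (n + 1))⁻¹ ≤ Real.exp (-(s * t)) := by
          rw [← hb]
          gcongr
          exact ht.2
        simpa only [mul_one_div] using
          hΨ.pow_mul_le_apply_mul_of_delta2 hK hΔ (n + 1) (one_div_pos.2 hk) hu

lemma ofReal_div_le_expModular_of_delta2 (hΨ : IsYoungFunction Ψ) {K s k : ℝ} (hK : 1 < K)
    (hΔ : ∀ x : ℝ, 0 < x → Ψ (2 * x) ≤ K * Ψ x) (hs : 0 < s) (hk : 0 < k) :
    ENNReal.ofReal (Ψ (1 / k) / (s * (K - 1))) ≤ expModular Ψ s k := by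
  have hK₀ : 0 < K := one_pos.trans hK
  set a : ℕ → ℝ := fun n => n * Real.log 2 / s
  have ha_mono : Monotone a := fun m n hmn => by
    simp only [a]
    gcongr
  have ha_exp : ∀ n : ℕ, Real.exp (-(s * a n)) = (2 ^ n)⁻¹ := fun n => by
    rw [mul_div_cancel₀ _ hs.ne', Real.exp_neg, Real.exp_nat_mul, Real.exp_log two_pos]
  have hsum : HasSum (fun n : ℕ => Ψ (1 / k) / s * K⁻¹ ^ (n + 1)) (Ψ (1 / k) / (s * (K - 1))) := by
    have h := (hasSum_geometric_of_lt_one (inv_nonneg.2 hK₀.le)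
      (inv_lt_one_of_one_lt₀ hK)).mul_left (Ψ (1 / k) / s * K⁻¹)
    rw [show Ψ (1 / k) / s * K⁻¹ * (1 - K⁻¹)⁻¹ = Ψ (1 / k) / (s * (K - 1)) by
      field_simp [(sub_pos.2 hK).ne']] at h
    simpa only [pow_succ', mul_assoc] using h
  have hpos : 0 < Ψ (1 / k) := hΨ.pos (one_div_pos.2 hk)
  calc ENNReal.ofReal (Ψ (1 / k) / (s * (K - 1)))
      = ∑' n : ℕ, ENNReal.ofReal (Ψ (1 / k) / s * K⁻¹ ^ (n + 1)) := by
        rw [← hsum.tsum_eq, ENNReal.ofReal_tsum_of_nonneg (fun n => by positivity) hsum.summable]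
    _ ≤ ∑' n : ℕ, ∫⁻ t in Ioc (a n) (a (n + 1)), ENNReal.ofReal (Ψ (Real.exp (-(s * t)) / k)) :=
        ENNReal.tsum_le_tsum fun n => hΨ.ofReal_le_lintegral_Ioc_of_delta2 hK₀ hΔ hs hk
          (ha_mono n.le_succ) (ha_exp n) (ha_exp (n + 1))
    _ = ∫⁻ t in ⋃ n, Ioc (a n) (a (n + 1)), ENNReal.ofReal (Ψ (Real.exp (-(s * t)) / k)) :=
        (lintegral_iUnion (fun _ => measurableSet_Ioc) ha_mono.pairwise_disjoint_on_Ioc_succ _).symm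
    _ ≤ expModular Ψ s k :=
        lintegral_mono_set <| iUnion_subset fun n =>
          Ioc_subset_Ioi_self.trans (Ioi_subset_Ioi (by positivity))

lemma div_le_expLuxNorm (hΨ : IsYoungFunction Ψ) {y c : ℝ} (hy : 0 < y) (hc : 0 < c)
    (h : ∀ k, 0 < k → expModular Ψ (Ψ y) k ≤ 1 → Ψ (c / k) ≤ Ψ y) :
    c / y ≤ expLuxNorm Ψ (Ψ y) := by
  refine le_csInf ⟨1 / y, one_div_pos.2 hy, hΨ.expModular_apply_one_div_le_one hy⟩ ?_
  rintro k ⟨hk, hmod⟩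
  have hck : c / k ≤ y :=
    (hΨ.1.le_iff_le (mem_Ioi.2 (div_pos hc hk)) (mem_Ioi.2 hy)).1 (h k hk hmod)
  rwa [div_le_iff₀ hk, ← div_le_iff₀' hy] at hck

lemma expLuxNorm_apply_le (hΨ : IsYoungFunction Ψ) {y : ℝ} (hy : 0 < y) :
    expLuxNorm Ψ (Ψ y) ≤ 1 / y :=
  expLuxNorm_le (one_div_pos.2 hy) (hΨ.expModular_apply_one_div_le_one hy)

lemma exp_neg_one_div_le_expLuxNorm (hΨ : IsYoungFunction Ψ) {y : ℝ} (hy : 0 < y) :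
    Real.exp (-1) / y ≤ expLuxNorm Ψ (Ψ y) := by
  have hs : 0 < Ψ y := hΨ.pos hy
  refine hΨ.div_le_expLuxNorm hy (Real.exp_pos _) fun k hk hmod => ?_
  have h := (hΨ.ofReal_mul_apply_le_expModular hs.le hk (inv_pos.2 hs)).trans hmod
  rwa [mul_inv_cancel₀ hs.ne', ENNReal.ofReal_le_one, inv_mul_le_iff₀ hs, mul_one] at h

lemma expLuxNorm_pos (hΨ : IsYoungFunction Ψ) {y : ℝ} (hy : 0 < y) :
    0 < expLuxNorm Ψ (Ψ y) :=
  (div_pos (Real.exp_pos _) hy).trans_le (hΨ.exp_neg_one_div_le_expLuxNorm hy)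

lemma min_one_div_mul_log_div_le_expLuxNorm (hΨ : IsYoungFunction Ψ) {K y : ℝ} (hK : 1 < K)
    (hΔ : ∀ x : ℝ, 0 < x → Ψ (2 * x) ≤ K * Ψ x) (hy : 0 < y) :
    min 1 (1 / (K * Real.log K)) / y ≤ expLuxNorm Ψ (Ψ y) := by
  have hK₀ : 0 < K := one_pos.trans hK
  have hKlog : 0 < K * Real.log K := mul_pos hK₀ (Real.log_pos hK)
  set c := min 1 (1 / (K * Real.log K))
  have hc₀ : 0 < c := lt_min one_pos (one_div_pos.2 hKlog)
  have hcK : c * (K - 1) ≤ 1 := by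
    have hK_sub : K - 1 ≤ K * Real.log K := by
      have := mul_le_mul_of_nonneg_left (Real.one_sub_inv_le_log_of_pos hK₀) hK₀.le
      rwa [mul_sub, mul_one, mul_inv_cancel₀ hK₀.ne'] at this
    calc c * (K - 1) ≤ 1 / (K * Real.log K) * (K * Real.log K) :=
          mul_le_mul (min_le_right _ _) hK_sub (sub_pos.2 hK).le (one_div_pos.2 hKlog).le
      _ = 1 := one_div_mul_cancel hKlog.ne'
  have hs : 0 < Ψ y := hΨ.pos hy
  refine hΨ.div_le_expLuxNorm hy hc₀ fun k hk hmod => ?_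
  have h := (hΨ.ofReal_div_le_expModular_of_delta2 hK hΔ hs hk).trans hmod
  rw [ENNReal.ofReal_le_one, div_le_one (mul_pos hs (sub_pos.2 hK))] at h
  calc Ψ (c / k) = Ψ (c * (1 / k)) := by rw [mul_one_div]
    _ ≤ c * Ψ (1 / k) := hΨ.apply_mul_le (one_div_pos.2 hk) hc₀ (min_le_left _ _)
    _ ≤ c * (Ψ y * (K - 1)) := by gcongr
    _ ≤ Ψ y := by nlinarith

end IsYoungFunction

theorem luxemburg_norm_of_exponential_general
    (Ψ Ψinv : ℝ → ℝ) (hΨ : IsYoungFunction Ψ)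
    (hΨinvpos : ∀ s : ℝ, 0 < s → 0 < Ψinv s)
    (hΨinv2 : ∀ s : ℝ, 0 < s → Ψ (Ψinv s) = s) :
    (∀ s : ℝ, 0 < s → expLuxNorm Ψ s ≤ 1 / Ψinv s ∧ Ψinv s ≤ 1 / expLuxNorm Ψ s) ∧
    (∀ K : ℝ, 1 < K → (∀ x : ℝ, 0 < x → Ψ (2 * x) ≤ K * Ψ x) →
      ∀ s : ℝ, 0 < s →
        min 1 (1 / (K * Real.log K)) * (1 / expLuxNorm Ψ s) ≤ Ψinv s ∧
        Ψinv s ≤ 1 / expLuxNorm Ψ s) := by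
  have upper : ∀ y, 0 < y → expLuxNorm Ψ (Ψ y) ≤ 1 / y ∧ y ≤ 1 / expLuxNorm Ψ (Ψ y) :=
    fun y hy => ⟨hΨ.expLuxNorm_apply_le hy,
      (le_one_div hy (hΨ.expLuxNorm_pos hy)).2 (hΨ.expLuxNorm_apply_le hy)⟩
  have reparam : ∀ s, 0 < s → ∃ y, 0 < y ∧ Ψ y = s ∧ Ψinv s = y :=
    fun s hs => ⟨Ψinv s, hΨinvpos s hs, hΨinv2 s hs, rfl⟩
  refine ⟨fun s hs => ?_, fun K hK hΔ s hs => ?_⟩ <;>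
    obtain ⟨y, hy, rfl, hinv⟩ := reparam s hs <;> rw [hinv]
  · exact upper y hy
  · refine ⟨?_, (upper y hy).2⟩
    rw [mul_one_div, div_le_iff₀ (hΨ.expLuxNorm_pos hy), ← div_le_iff₀' hy]
    exact hΨ.min_one_div_mul_log_div_le_expLuxNorm hK hΔ hy

/-- `N(s) ≤ 1/Ψ⁻¹(s)` for every `s > 0`, and if `Ψ` satisfies the global
`Δ₂`-condition with constant `K > 1`, then with `c = min{1, 1/(K·log K)}` one has
`c·(1/N(s)) ≤ Ψ⁻¹(s) ≤ 1/N(s)` for every `s > 0`. -/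
theorem luxemburg_norm_of_exponential
    (Ψ Ψinv : ℝ → ℝ) (hΨ : IsYoungFunction Ψ)
    (hΨinvpos : ∀ s : ℝ, 0 < s → 0 < Ψinv s)
    (hΨinv1 : ∀ t : ℝ, 0 < t → Ψinv (Ψ t) = t)
    (hΨinv2 : ∀ s : ℝ, 0 < s → Ψ (Ψinv s) = s) :
    (∀ s : ℝ, 0 < s → expLuxNorm Ψ s ≤ 1 / Ψinv s ∧ Ψinv s ≤ 1 / expLuxNorm Ψ s) ∧
    (∀ K : ℝ, 1 < K → (∀ x : ℝ, 0 < x → Ψ (2 * x) ≤ K * Ψ x) →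
      ∀ s : ℝ, 0 < s →
        min 1 (1 / (K * Real.log K)) * (1 / expLuxNorm Ψ s) ≤ Ψinv s ∧
        Ψinv s ≤ 1 / expLuxNorm Ψ s) :=
  luxemburg_norm_of_exponential_general Ψ Ψinv hΨ hΨinvpos hΨinv2
end
end

section
/- Let Φ be a Young function that does NOT satisfy the Δ₂-condition near infinity, i.e. for every K > 0 and t₀ > 0 there exists t ≥ t₀ with Φ(2t) > K·Φ(t). For t ≥ 0 let S(t) denote the right shift on functions on (0,1): (S(t)v)(r) = v(r − t) for r ∈ (t,1) and (S(t)v)(r) = 0 otherwise. Then there exists v ∈ L_Φ(0,1) such that ‖S(t)v − v‖_{L_Φ(0,1)} ≥ 1 for every t > 0; in particular the right shift semigroup on L_Φ(0,1) is not strongly continuous. -/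
open MeasureTheory Set Filter Topology ENNReal

noncomputable section

/-- Extension of a Young function to `ℝ≥0∞`. -/
def phiE (Φ : ℝ → ℝ) (x : ℝ≥0∞) : ℝ≥0∞ :=
  if x = ∞ then ∞ else ENNReal.ofReal (Φ x.toReal)

/-- The Luxemburg (quasi-)norm `inf { k > 0 : ∫ Φ(g/k) dμ ≤ 1 }`. -/
def luxNorm {Ω : Type*} [MeasurableSpace Ω] (Φ : ℝ → ℝ) (μ : Measure Ω)
    (g : Ω → ℝ≥0∞) : ℝ≥0∞ :=
  sInf {k : ℝ≥0∞ | 0 < k ∧ k < ∞ ∧ ∫⁻ ω, phiE Φ (g ω / k) ∂μ ≤ 1}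

/-!
Since `Φ` fails `Δ₂`, for every `λ > 1` there are arbitrarily large `u` with
`Φ(λ u) ≫ Φ(u)`. Choosing such `u_n` for `λ_n ↓ 1` and putting the value `u_n` on an interval
of length `a_n = 2 / Φ(λ_n u_n)`, the intervals stacked towards `0`, gives a function `v` with
`∑ Φ(u_n) a_n < ∞`, so `v ∈ L_Φ`, while for every `k < 1` all but finitely many blocks carry
`∫ Φ(v / k) ≥ Φ(λ_n u_n) a_n = 2`. The right shift `S(t) v` vanishes on `(0, t)`, which contains
all but finitely many blocks, so `∫ Φ(|S(t) v - v| / k) > 1` and `‖S(t) v - v‖ ≥ 1`.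
-/

section DeltaTwo

variable {Φ : ℝ → ℝ}

lemma apply_pow_mul_le_of_apply_mul_le {c K t₀ : ℝ} (hc : 1 ≤ c) (hK : 0 ≤ K) (ht₀ : 0 ≤ t₀)
    (h : ∀ s, t₀ ≤ s → Φ (c * s) ≤ K * Φ s) (m : ℕ) {s : ℝ} (hs : t₀ ≤ s) :
    Φ (c ^ m * s) ≤ K ^ m * Φ s := by
  induction m generalizing s with
  | zero => simp
  | succ m ih =>
    have hcs : t₀ ≤ c * s := hs.trans (le_mul_of_one_le_left (ht₀.trans hs) hc)
    calc Φ (c ^ (m + 1) * s) = Φ (c ^ m * (c * s)) := by ring_nf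
      _ ≤ K ^ m * Φ (c * s) := ih hcs
      _ ≤ K ^ m * (K * Φ s) := mul_le_mul_of_nonneg_left (h s hs) (pow_nonneg hK m)
      _ = K ^ (m + 1) * Φ s := by ring

lemma exists_lt_apply_mul_of_not_delta2 (hmono : MonotoneOn Φ (Ioi 0))
    (hΔ : ∀ K t₀ : ℝ, 0 < K → 0 < t₀ → ∃ t : ℝ, t₀ ≤ t ∧ K * Φ t < Φ (2 * t))
    {c K t₀ : ℝ} (hc : 1 < c) (hK : 0 < K) (ht₀ : 0 < t₀) :
    ∃ t : ℝ, t₀ ≤ t ∧ K * Φ t < Φ (c * t) := by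
  by_contra! hbound
  obtain ⟨m, hm⟩ := pow_unbounded_of_one_lt 2 hc
  obtain ⟨t, ht, hlt⟩ := hΔ (K ^ m) t₀ (pow_pos hK m) ht₀
  have ht0 : 0 < t := ht₀.trans_le ht
  have h2 : Φ (2 * t) ≤ Φ (c ^ m * t) :=
    hmono (mem_Ioi.2 (by positivity)) (mem_Ioi.2 (by positivity))
      (mul_le_mul_of_nonneg_right hm.le ht0.le)
  have := apply_pow_mul_le_of_apply_mul_le hc.le hK.le ht₀.le hbound m ht
  linarith

end DeltaTwo

lemma exists_seq_of_not_delta2 {Φ : ℝ → ℝ} (hmono : MonotoneOn Φ (Ioi 0))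
    (hpos : ∀ t : ℝ, 0 < t → 0 < Φ t)
    (hΔ : ∀ K t₀ : ℝ, 0 < K → 0 < t₀ → ∃ t : ℝ, t₀ ≤ t ∧ K * Φ t < Φ (2 * t)) :
    ∃ u a : ℕ → ℝ, (∀ n, 0 ≤ u n) ∧ (∀ n, 0 < a n) ∧ Summable a ∧
      Summable (fun n => Φ (u n) * a n) ∧
      ∀ k : ℝ, 0 < k → k < 1 → ∀ᶠ n in atTop, 1 < Φ (u n / k) * a n := by
  set c : ℕ → ℝ := fun n => 1 + 1 / ((n : ℝ) + 1)
  have hc : ∀ n, 1 < c n := fun n => lt_add_of_pos_right _ (by positivity)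
  choose u hu1 hu using fun n =>
    exists_lt_apply_mul_of_not_delta2 hmono hΔ (hc n) (pow_pos two_pos n) one_pos
  have hu0 : ∀ n, 0 < u n := fun n => one_pos.trans_le (hu1 n)
  have hΦcu : ∀ n, 0 < Φ (c n * u n) := fun n => hpos _ (mul_pos (one_pos.trans (hc n)) (hu0 n))
  set a : ℕ → ℝ := fun n => 2 / Φ (c n * u n)
  have ha0 : ∀ n, 0 < a n := fun n => div_pos two_pos (hΦcu n)
  have hΦa : ∀ n, Φ (u n) * a n ≤ 2 * (1 / 2) ^ n := fun n => by
    have hlt : Φ (u n) < (1 / 2) ^ n * Φ (c n * u n) :=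
      calc Φ (u n) = (1 / 2) ^ n * (2 ^ n * Φ (u n)) := by rw [← mul_assoc, ← mul_pow]; norm_num
        _ < _ := mul_lt_mul_of_pos_left (hu n) (by positivity)
    rw [mul_div_assoc', div_le_iff₀ (hΦcu n)]
    linarith
  have hΦsum : Summable (fun n => Φ (u n) * a n) :=
    .of_nonneg_of_le (fun n => (mul_pos (hpos _ (hu0 n)) (ha0 n)).le) hΦa
      (summable_geometric_two.mul_left 2)
  have ha : Summable a := by
    refine .of_nonneg_of_le (fun n => (ha0 n).le) (fun n => ?_) (hΦsum.div_const (Φ 1))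
    rw [le_div_iff₀ (hpos 1 one_pos), mul_comm]
    exact mul_le_mul_of_nonneg_right (hmono (mem_Ioi.2 one_pos) (mem_Ioi.2 (hu0 n)) (hu1 n))
      (ha0 n).le
  refine ⟨u, a, fun n => (hu0 n).le, ha0, ha, hΦsum, fun k hk0 hk1 => ?_⟩
  have hc_lim : Tendsto c atTop (𝓝 1) := by
    simpa [c] using tendsto_one_div_add_atTop_nhds_zero_nat.const_add (1 : ℝ)
  filter_upwards [hc_lim.eventually_lt_const (one_lt_one_div hk0 hk1)] with n hn
  have hcu : c n * u n ≤ u n / k := by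
    rw [le_div_iff₀ hk0, mul_right_comm]
    nlinarith [hu0 n, (lt_div_iff₀ hk0).1 hn]
  calc (1 : ℝ) < Φ (c n * u n) * a n := by
        rw [mul_div_assoc', mul_div_cancel_left₀ _ (hΦcu n).ne']; norm_num
    _ ≤ Φ (u n / k) * a n := mul_le_mul_of_nonneg_right
        (hmono (mem_Ioi.2 (mul_pos (one_pos.trans (hc n)) (hu0 n)))
          (mem_Ioi.2 (div_pos (hu0 n) hk0)) hcu) (ha0 n).le

open Function in
lemma setLIntegral_iUnion_of_forall_eq {α ι : Type*} [Countable ι] [MeasurableSpace α]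
    {μ : Measure α} {E : ι → Set α} {f : α → ℝ≥0∞} {c : ι → ℝ≥0∞}
    (hE : ∀ i, MeasurableSet (E i)) (hd : Pairwise (Disjoint on E))
    (hf : ∀ i, ∀ x ∈ E i, f x = c i) :
    ∫⁻ x in ⋃ i, E i, f x ∂μ = ∑' i, c i * μ (E i) := by
  rw [lintegral_iUnion hE hd]
  exact tsum_congr fun i => by rw [setLIntegral_congr_fun (hE i) (hf i), setLIntegral_const]

lemma phiE_ofReal (Φ : ℝ → ℝ) {x : ℝ} (hx : 0 ≤ x) :
    phiE Φ (ENNReal.ofReal x) = ENNReal.ofReal (Φ x) := by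
  rw [phiE, if_neg ofReal_ne_top, toReal_ofReal hx]

lemma one_le_luxNorm_of_forall_lt_one {Ω : Type*} [MeasurableSpace Ω] {Φ : ℝ → ℝ}
    {μ : Measure Ω} {g : Ω → ℝ≥0∞}
    (h : ∀ k : ℝ, 0 < k → k < 1 → 1 < ∫⁻ ω, phiE Φ (g ω / ENNReal.ofReal k) ∂μ) :
    1 ≤ luxNorm Φ μ g := by
  refine le_sInf fun k ⟨hk0, hktop, hk⟩ => not_lt.1 fun hk1 => (h k.toReal ?_ ?_).not_ge ?_
  · exact toReal_pos hk0.ne' hktop.ne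
  · exact toReal_lt_of_lt_ofReal (by simpa using hk1)
  · rwa [ofReal_toReal hktop.ne]

section Blocks

variable {a : ℕ → ℝ}

def tailSum (a : ℕ → ℝ) (n : ℕ) : ℝ := ∑' m, a (m + n)

def tailBlock (a : ℕ → ℝ) (n : ℕ) : Set ℝ := Ico (tailSum a (n + 1)) (tailSum a n)

def blockFun (a u : ℕ → ℝ) (r : ℝ) : ℝ := ∑' n, (tailBlock a n).indicator (fun _ => u n) r

lemma tailSum_eq_add (ha : Summable a) (n : ℕ) : tailSum a n = a n + tailSum a (n + 1) := by
  rw [tailSum, ((summable_nat_add_iff n).2 ha).tsum_eq_zero_add, tailSum]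
  simp only [zero_add, add_right_comm _ 1 n, add_assoc]

lemma tailSum_pos (ha : Summable a) (ha0 : ∀ n, 0 < a n) (n : ℕ) : 0 < tailSum a n :=
  ((summable_nat_add_iff n).2 ha).tsum_pos (fun _ => (ha0 _).le) 0 (ha0 _)

lemma antitone_tailSum (ha : Summable a) (ha0 : ∀ n, 0 < a n) : Antitone (tailSum a) :=
  antitone_nat_of_succ_le fun n => by rw [tailSum_eq_add ha n]; linarith [ha0 n]

lemma tendsto_tailSum (a : ℕ → ℝ) : Tendsto (tailSum a) atTop (𝓝 0) :=
  tendsto_sum_nat_add a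

lemma volume_tailBlock (ha : Summable a) (n : ℕ) :
    volume (tailBlock a n) = ENNReal.ofReal (a n) := by
  rw [tailBlock, Real.volume_Ico, tailSum_eq_add ha n, add_sub_cancel_right]

open Function in
lemma pairwise_disjoint_tailBlock (ha : Summable a) (ha0 : ∀ n, 0 < a n) :
    Pairwise (Disjoint on tailBlock a) :=
  (antitone_tailSum ha ha0).pairwise_disjoint_on_Ico_succ

lemma tailBlock_subset_Ioo (ha : Summable a) (ha0 : ∀ n, 0 < a n) (n : ℕ) :
    tailBlock a n ⊆ Ioo 0 (tailSum a n) :=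
  fun _ hr => ⟨(tailSum_pos ha ha0 _).trans_le hr.1, hr.2⟩

lemma blockFun_eq_of_mem (ha : Summable a) (ha0 : ∀ n, 0 < a n) (u : ℕ → ℝ) {n : ℕ} {r : ℝ}
    (hr : r ∈ tailBlock a n) : blockFun a u r = u n := by
  rw [blockFun, tsum_eq_single n fun m hm => indicator_of_notMem
    (fun hr' => (pairwise_disjoint_tailBlock ha ha0 hm).ne_of_mem hr' hr rfl) _,
    indicator_of_mem hr]

lemma blockFun_eq_zero_of_notMem (u : ℕ → ℝ) {r : ℝ} (hr : r ∉ ⋃ n, tailBlock a n) :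
    blockFun a u r = 0 := by
  simp only [mem_iUnion, not_exists] at hr
  simp [blockFun, indicator_of_notMem (hr _)]

lemma measurable_blockFun (a u : ℕ → ℝ) : Measurable (blockFun a u) :=
  Measurable.tsum fun _ => measurable_const.indicator measurableSet_Ico

lemma enorm_blockFun_eq_of_mem (ha : Summable a) (ha0 : ∀ n, 0 < a n) {u : ℕ → ℝ}
    (hu : ∀ n, 0 ≤ u n) {n : ℕ} {r : ℝ} (hr : r ∈ tailBlock a n) :
    (‖blockFun a u r‖₊ : ℝ≥0∞) = ENNReal.ofReal (u n) := by
  rw [blockFun_eq_of_mem ha ha0 u hr, ← enorm_eq_nnnorm, Real.enorm_eq_ofReal (hu n)]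

lemma setLIntegral_phiE_blockFun_lt_top (Φ : ℝ → ℝ) (ha : Summable a) (ha0 : ∀ n, 0 < a n)
    {u : ℕ → ℝ} (hu : ∀ n, 0 ≤ u n) (hΦ : Summable fun n => Φ (u n) * a n) :
    ∫⁻ r in Ioo (0 : ℝ) 1, phiE Φ ‖blockFun a u r‖₊ < ∞ := by
  have hU : MeasurableSet (⋃ n, tailBlock a n) := .iUnion fun _ => measurableSet_Ico
  rw [← lintegral_add_compl _ hU]
  refine add_lt_top.2 ⟨?_, ?_⟩
  · rw [setLIntegral_iUnion_of_forall_eq (E := tailBlock a) (fun _ => measurableSet_Ico)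
      (pairwise_disjoint_tailBlock ha ha0) (f := fun r => phiE Φ ‖blockFun a u r‖₊)
      (c := fun n => ENNReal.ofReal (Φ (u n)))
      fun n r hr => by rw [enorm_blockFun_eq_of_mem ha ha0 hu hr, phiE_ofReal Φ (hu n)]]
    calc ∑' n, ENNReal.ofReal (Φ (u n)) * volume.restrict (Ioo 0 1) (tailBlock a n)
        ≤ ∑' n, ENNReal.ofReal (Φ (u n) * a n) := ENNReal.tsum_le_tsum fun n => by
          rw [ofReal_mul' (ha0 n).le, ← volume_tailBlock ha n]
          exact mul_le_mul_right (Measure.restrict_apply_le _ _) _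
      _ < ∞ := (tsum_coe_ne_top_iff_summable.2 hΦ.toNNReal).lt_top
  · rw [setLIntegral_congr_fun hU.compl fun r hr => by rw [blockFun_eq_zero_of_notMem _ hr],
      setLIntegral_const]
    exact mul_lt_top (by simp [phiE]) (measure_lt_top _ _)

-- On a block inside `(0, t)` the shifted function vanishes, so `|S(t) v - v| = v` there.
lemma ofReal_le_setLIntegral_phiE_shift_sub_blockFun {Φ : ℝ → ℝ} (ha : Summable a)
    (ha0 : ∀ n, 0 < a n) {u : ℕ → ℝ} (hu : ∀ n, 0 ≤ u n) {t k : ℝ} (hk : 0 < k) {n : ℕ}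
    (hnt : tailSum a n ≤ t) (hn1 : tailSum a n ≤ 1) :
    ENNReal.ofReal (Φ (u n / k) * a n) ≤ ∫⁻ r in Ioo (0 : ℝ) 1,
      phiE Φ (‖(if t < r then blockFun a u (r - t) else 0) - blockFun a u r‖₊ /
        ENNReal.ofReal k) := by
  have hsub : tailBlock a n ⊆ Ioo 0 1 :=
    (tailBlock_subset_Ioo ha ha0 n).trans (Ioo_subset_Ioo_right hn1)
  calc ENNReal.ofReal (Φ (u n / k) * a n)
      = ∫⁻ _ in tailBlock a n, ENNReal.ofReal (Φ (u n / k)) := by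
        rw [setLIntegral_const, volume_tailBlock ha, ofReal_mul' (ha0 n).le]
    _ = ∫⁻ r in tailBlock a n, phiE Φ
          (‖(if t < r then blockFun a u (r - t) else 0) - blockFun a u r‖₊ / ENNReal.ofReal k) :=
        setLIntegral_congr_fun measurableSet_Ico fun r hr => by
          rw [if_neg (not_lt.2 (hr.2.le.trans hnt)), zero_sub, nnnorm_neg,
            enorm_blockFun_eq_of_mem ha ha0 hu hr, ← ofReal_div_of_pos hk,
            phiE_ofReal Φ (div_nonneg (hu n) hk.le)]
    _ ≤ _ := lintegral_mono_set hsub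

end Blocks

theorem right_shift_not_strongly_continuous_on_LPhi_general
    (Φ : ℝ → ℝ) (hΦ : IsYoungFunction Φ)
    (hnotΔ2 : ∀ K t₀ : ℝ, 0 < K → 0 < t₀ → ∃ t : ℝ, t₀ ≤ t ∧ K * Φ t < Φ (2 * t)) :
    ∃ v : ℝ → ℝ, Measurable v ∧
      (∃ k : ℝ≥0∞, 0 < k ∧ k < ∞ ∧
        ∫⁻ r in Set.Ioo (0:ℝ) 1, phiE Φ ((‖v r‖₊ : ℝ≥0∞) / k) < ∞) ∧
      ∀ t : ℝ, 0 < t →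
        1 ≤ luxNorm Φ (volume.restrict (Set.Ioo (0:ℝ) 1))
              (fun r => (‖(if t < r then v (r - t) else 0) - v r‖₊ : ℝ≥0∞)) := by
  obtain ⟨hmono, -, -, hpos, -, -⟩ := hΦ
  obtain ⟨u, a, hu, ha0, ha, hΦsum, hlarge⟩ :=
    exists_seq_of_not_delta2 hmono.monotoneOn hpos hnotΔ2
  refine ⟨blockFun a u, measurable_blockFun a u, ⟨1, one_pos, one_lt_top, ?_⟩,
    fun t ht => one_le_luxNorm_of_forall_lt_one fun k hk0 hk1 => ?_⟩
  · simpa only [div_one] using setLIntegral_phiE_blockFun_lt_top Φ ha ha0 hu hΦsum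
  obtain ⟨n, ⟨hnt, hn1⟩, hn⟩ := (((tendsto_tailSum a).eventually_lt_const ht).and
    ((tendsto_tailSum a).eventually_lt_const one_pos)).and (hlarge k hk0 hk1) |>.exists
  exact (one_lt_ofReal.2 hn).trans_le
    (ofReal_le_setLIntegral_phiE_shift_sub_blockFun ha ha0 hu hk0 hnt.le hn1.le)

/-- if the Young function `Φ` does not satisfy the `Δ₂`-condition near
infinity, then there is `v ∈ L_Φ(0,1)` with `‖S(t)v − v‖_{L_Φ(0,1)} ≥ 1` for every
`t > 0`, where `(S(t)v)(r) = v(r−t)` for `r ∈ (t,1)` and `0` otherwise; in particular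
the right shift semigroup on `L_Φ(0,1)` is not strongly continuous. -/
theorem right_shift_not_strongly_continuous_on_LPhi
    (Φ : ℝ → ℝ) (hΦ : IsYoungFunction Φ) (hΦ0 : Φ 0 = 0)
    (hnotΔ2 : ∀ K t₀ : ℝ, 0 < K → 0 < t₀ → ∃ t : ℝ, t₀ ≤ t ∧ K * Φ t < Φ (2 * t)) :
    ∃ v : ℝ → ℝ, Measurable v ∧
      (∃ k : ℝ≥0∞, 0 < k ∧ k < ∞ ∧
        ∫⁻ r in Set.Ioo (0:ℝ) 1, phiE Φ ((‖v r‖₊ : ℝ≥0∞) / k) < ∞) ∧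
      ∀ t : ℝ, 0 < t →
        1 ≤ luxNorm Φ (volume.restrict (Set.Ioo (0:ℝ) 1))
              (fun r => (‖(if t < r then v (r - t) else 0) - v r‖₊ : ℝ≥0∞)) :=
  right_shift_not_strongly_continuous_on_LPhi_general Φ hΦ hnotΔ2
end
end

section
/- Let Φ be a Young function. Then for every t > 0: sup_{s > 0} (s/Φ⁻¹(s))·e^{−st/2} ≤ 2 / (t·Φ⁻¹(1/t)). -/
open MeasureTheory Set Filter Topology ENNReal

noncomputable section

/-! The inverse `Φ⁻¹` is increasing, and so is `s ↦ s / Φ⁻¹ s`: with `u = Φ⁻¹ s` this is the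
monotonicity of `u ↦ Φ u / u`, the slope of the chord from the origin of a convex function with
`Φ (0+) = 0`. If `st ≤ 2`, drop the exponential and compare with the value at `s = 2/t`; if `st ≥ 2`,
write the left side as `(2/t) / Φ⁻¹ s · x e^{-x}` with `x = st/2 ≥ 1`, use `x e^{-x} ≤ 1` and
`Φ⁻¹ s ≥ Φ⁻¹ (1/t)`. -/

theorem StrictMonoOn.monotoneOn_of_rightInvOn {α β : Type*} [LinearOrder α] [Preorder β]
    {f : α → β} {g : β → α} {s : Set α} {t : Set β} (hf : StrictMonoOn f s)
    (hg : MapsTo g t s) (hgf : RightInvOn g f t) : MonotoneOn g t := by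
  intro a ha b hb hab
  rwa [← hf.le_iff_le (hg ha) (hg hb), hgf ha, hgf hb]

theorem ConvexOn.div_le_div_of_tendsto_nhdsGT_zero {f : ℝ → ℝ} (hf : ConvexOn ℝ (Ioi 0) f)
    (hf0 : Tendsto f (𝓝[>] 0) (𝓝 0)) {u v : ℝ} (hu : 0 < u) (huv : u ≤ v) :
    f u / u ≤ f v / v := by
  have hv : 0 < v := hu.trans_le huv
  have hsecant : ∀ᶠ a in 𝓝[>] 0, (f u - f a) / (u - a) ≤ (f v - f a) / (v - a) := by
    filter_upwards [Ioo_mem_nhdsGT hu] with a ⟨ha, hau⟩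
    exact hf.secant_mono ha hu hv hau.ne' (hau.trans_le huv).ne' huv
  have hlim : ∀ w ≠ (0 : ℝ),
      Tendsto (fun a => (f w - f a) / (w - a)) (𝓝[>] 0) (𝓝 ((f w - 0) / (w - 0))) :=
    fun w hw => (tendsto_const_nhds.sub hf0).div
      (tendsto_const_nhds.sub (tendsto_nhdsWithin_of_tendsto_nhds tendsto_id)) (by simpa using hw)
  simpa using le_of_tendsto_of_tendsto (hlim u hu.ne') (hlim v hv.ne') hsecant

theorem IsYoungFunction.tendsto_nhdsGT_zero_s14 {Φ : ℝ → ℝ} (hΦ : IsYoungFunction Φ) :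
    Tendsto Φ (𝓝[>] 0) (𝓝 0) := by
  have hprod := hΦ.2.2.2.2.1.mul (tendsto_nhdsWithin_of_tendsto_nhds tendsto_id)
  rw [zero_mul] at hprod
  refine hprod.congr' ?_
  filter_upwards [self_mem_nhdsWithin] with t ht
  exact div_mul_cancel₀ (Φ t) (ne_of_gt ht)

theorem IsYoungFunction.monotoneOn_div_rightInv {Φ Φinv : ℝ → ℝ} (hΦ : IsYoungFunction Φ)
    (hmaps : MapsTo Φinv (Ioi 0) (Ioi 0)) (hinv : RightInvOn Φinv Φ (Ioi 0)) :
    MonotoneOn (fun s => s / Φinv s) (Ioi 0) := by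
  intro a ha b hb hab
  have hslope := hΦ.2.2.1.div_le_div_of_tendsto_nhdsGT_zero hΦ.tendsto_nhdsGT_zero_s14 (hmaps ha)
    (hΦ.1.monotoneOn_of_rightInvOn hmaps hinv ha hb hab)
  rwa [hinv ha, hinv hb] at hslope

theorem Real.mul_exp_neg_le_one (x : ℝ) : x * Real.exp (-x) ≤ 1 := by
  rw [Real.exp_neg, mul_inv_le_iff₀ (Real.exp_pos x), one_mul]
  linarith [Real.add_one_le_exp x]

theorem div_mul_exp_neg_le_of_monotoneOn {h : ℝ → ℝ} (hpos : MapsTo h (Ioi 0) (Ioi 0))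
    (hmono : MonotoneOn h (Ioi 0)) (hdiv : MonotoneOn (fun s => s / h s) (Ioi 0))
    {t s : ℝ} (ht : 0 < t) (hs : 0 < s) :
    s / h s * Real.exp (-(s * t / 2)) ≤ 2 / (t * h (1 / t)) := by
  have hinvt : (0 : ℝ) < 1 / t := by positivity
  have hh : 0 < h (1 / t) := hpos hinvt
  have hhs : 0 < h s := hpos hs
  rw [← div_div]
  rcases le_total s (2 / t) with hst | hst
  · have hexp : Real.exp (-(s * t / 2)) ≤ 1 := by
      rw [Real.exp_le_one_iff, neg_nonpos]; positivity
    have h2t : (0 : ℝ) < 2 / t := by positivity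
    calc s / h s * Real.exp (-(s * t / 2)) ≤ s / h s :=
          mul_le_of_le_one_right (by positivity) hexp
      _ ≤ 2 / t / h (2 / t) := hdiv hs h2t hst
      _ ≤ 2 / t / h (1 / t) := by
          gcongr 2 / t / ?_
          exact hmono hinvt h2t (by gcongr; norm_num)
  · have hst' : 1 / t ≤ s := le_trans (by gcongr; norm_num) hst
    calc s / h s * Real.exp (-(s * t / 2))
        = 2 / t / h s * (s * t / 2 * Real.exp (-(s * t / 2))) := by
          field_simp
      _ ≤ 2 / t / h s := mul_le_of_le_one_right (by positivity)
          (Real.mul_exp_neg_le_one _)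
      _ ≤ 2 / t / h (1 / t) := by
          gcongr 2 / t / ?_
          exact hmono hinvt hs hst'

theorem sup_div_inv_mul_exp_bound_general
    (Φ Φinv : ℝ → ℝ) (hΦ : IsYoungFunction Φ)
    (hΦinvpos : ∀ s : ℝ, 0 < s → 0 < Φinv s)
    (hΦinv2 : ∀ s : ℝ, 0 < s → Φ (Φinv s) = s) :
    ∀ t : ℝ, 0 < t → ∀ s : ℝ, 0 < s →
      (s / Φinv s) * Real.exp (-(s * t / 2)) ≤ 2 / (t * Φinv (1/t)) := by
  have hmaps : MapsTo Φinv (Ioi 0) (Ioi 0) := hΦinvpos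
  have hinv : RightInvOn Φinv Φ (Ioi 0) := hΦinv2
  exact fun t ht s hs => div_mul_exp_neg_le_of_monotoneOn hmaps
    (hΦ.1.monotoneOn_of_rightInvOn hmaps hinv) (hΦ.monotoneOn_div_rightInv hmaps hinv) ht hs

/-- for a Young function `Φ` and every `t > 0`,
`sup_{s>0} (s/Φ⁻¹(s))·e^{−st/2} ≤ 2/(t·Φ⁻¹(1/t))`, stated as the corresponding
pointwise upper bound for all `s > 0`. -/
theorem sup_div_inv_mul_exp_bound
    (Φ Φinv : ℝ → ℝ) (hΦ : IsYoungFunction Φ)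
    (hΦinvpos : ∀ s : ℝ, 0 < s → 0 < Φinv s)
    (hΦinv1 : ∀ t : ℝ, 0 < t → Φinv (Φ t) = t)
    (hΦinv2 : ∀ s : ℝ, 0 < s → Φ (Φinv s) = s) :
    ∀ t : ℝ, 0 < t → ∀ s : ℝ, 0 < s →
      (s / Φinv s) * Real.exp (-(s * t / 2)) ≤ 2 / (t * Φinv (1/t)) :=
  sup_div_inv_mul_exp_bound_general Φ Φinv hΦ hΦinvpos hΦinv2
end
end

section
/- Let Φ be of class 𝒫 with parameters 1 < p < q < ∞ and let c > 0. Then the constant K = ∫₀^∞ max(s^{1/p − 1}, s^{1/q − 1})·e^{−cs} ds is finite, and for every t > 0: ∫₀^∞ (Φ⁻¹(r)/r)·e^{−crt} dr ≤ K·Φ⁻¹(1/t). -/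
open MeasureTheory Set Filter Topology ENNReal

noncomputable section

/-!
Writing `r = (rt)·(1/t)`, submultiplicativity of `Φ⁻¹` gives
`Φ⁻¹(r)/r ≤ t·max((rt)^{1/p-1}, (rt)^{1/q-1})·Φ⁻¹(1/t)`, and the substitution `s = rt`
turns the integral of the right-hand side against `e^{-crt}` into `K·Φ⁻¹(1/t)`.
`K` is finite because both exponents `1/p - 1` and `1/q - 1` exceed `-1`.
-/

lemma lintegral_Ioi_comp_mul_right (f : ℝ → ℝ≥0∞) (a : ℝ) {b : ℝ} (hb : 0 < b) :
    ∫⁻ x in Ioi a, f (x * b) = ENNReal.ofReal b⁻¹ * ∫⁻ x in Ioi (a * b), f x := by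
  let e := (Homeomorph.mulRight₀ b hb.ne').toMeasurableEquiv
  have he : e ⁻¹' Ioi (a * b) = Ioi a := by
    rw [show ⇑e = (· * b) from rfl, preimage_mul_const_Ioi₀ _ hb, mul_div_cancel_right₀ _ hb.ne']
  rw [← abs_of_pos (inv_pos.2 hb), ← smul_eq_mul, ← lintegral_smul_measure, ← Measure.restrict_smul,
    ← Real.map_volume_mul_right hb.ne', show (· * b) = ⇑e from rfl, e.restrict_map,
    lintegral_map_equiv, he]
  rfl

lemma lintegral_Ioi_max_rpow_mul_exp_neg_mul_lt_top {a b c : ℝ} (ha : -1 < a) (hb : -1 < b)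
    (hc : 0 < c) :
    ∫⁻ s in Ioi (0:ℝ), ENNReal.ofReal (max (s ^ a) (s ^ b) * Real.exp (-(c * s))) < ∞ := by
  have hint : ∀ {e : ℝ}, -1 < e →
      IntegrableOn (fun s : ℝ => s ^ e * Real.exp (-(c * s))) (Ioi 0) := fun he => by
    simpa only [Real.rpow_one, neg_mul] using integrableOn_rpow_mul_exp_neg_mul_rpow he one_pos hc
  refine IntegrableOn.setLIntegral_lt_top ?_
  simp_rw [max_mul_of_nonneg _ _ (Real.exp_pos _).le]
  exact (hint ha).sup (hint hb)

lemma IsClassP.inv_mul_le {Φ Φinv : ℝ → ℝ} {p q : ℝ} (hΦ : IsClassP Φ Φinv p q)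
    {u v : ℝ} (hu : 0 < u) (hv : 0 < v) :
    Φinv (u * v) ≤ max (u ^ (1/p)) (u ^ (1/q)) * Φinv v := by
  obtain ⟨-, -, -, -, -, -, ρ, -, -, -, hρ_mul, hΦinv⟩ := hΦ
  set e : ℝ := 1/q - 1/p
  have hmax : u ^ (1/p) * max 1 (u ^ e) = max (u ^ (1/p)) (u ^ (1/q)) := by
    rw [mul_max_of_nonneg _ _ (Real.rpow_pos_of_pos hu _).le, mul_one, ← Real.rpow_add hu,
      add_sub_cancel]
  calc Φinv (u * v) = u ^ (1/p) * v ^ (1/p) * ρ (u ^ e * v ^ e) := by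
        rw [hΦinv _ (mul_pos hu hv), Real.mul_rpow hu.le hv.le, Real.mul_rpow hu.le hv.le]
    _ ≤ u ^ (1/p) * v ^ (1/p) * (max 1 (u ^ e) * ρ (v ^ e)) := by
        gcongr
        exact hρ_mul _ _ (Real.rpow_pos_of_pos hu e) (Real.rpow_pos_of_pos hv e)
    _ = (u ^ (1/p) * max 1 (u ^ e)) * (v ^ (1/p) * ρ (v ^ e)) := by ring
    _ = max (u ^ (1/p)) (u ^ (1/q)) * Φinv v := by rw [hmax, hΦinv _ hv]

lemma IsClassP.inv_div_le {Φ Φinv : ℝ → ℝ} {p q : ℝ} (hΦ : IsClassP Φ Φinv p q)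
    {r t : ℝ} (hr : 0 < r) (ht : 0 < t) :
    Φinv r / r ≤ max ((r * t) ^ (1/p - 1)) ((r * t) ^ (1/q - 1)) * t * Φinv (1/t) := by
  have hrt : 0 < r * t := mul_pos hr ht
  have hkey := hΦ.inv_mul_le hrt (one_div_pos.2 ht)
  rw [mul_one_div, mul_div_cancel_right₀ _ ht.ne'] at hkey
  calc Φinv r / r ≤ max ((r * t) ^ (1/p)) ((r * t) ^ (1/q)) * Φinv (1/t) / r := by gcongr
    _ = max ((r * t) ^ (1/p)) ((r * t) ^ (1/q)) / (r * t) * t * Φinv (1/t) := by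
        field_simp
    _ = max ((r * t) ^ (1/p - 1)) ((r * t) ^ (1/q - 1)) * t * Φinv (1/t) := by
        rw [Real.rpow_sub_one hrt.ne', Real.rpow_sub_one hrt.ne', max_div_div_right hrt.le]

lemma IsClassP.ofReal_inv_div_mul_exp_le {Φ Φinv : ℝ → ℝ} {p q : ℝ}
    (hΦ : IsClassP Φ Φinv p q) (c : ℝ) {r t : ℝ} (hr : 0 < r) (ht : 0 < t) :
    ENNReal.ofReal (Φinv r / r * Real.exp (-(c * r * t)))
      ≤ ENNReal.ofReal (max ((r * t) ^ (1/p - 1)) ((r * t) ^ (1/q - 1)) *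
          Real.exp (-(c * (r * t)))) * ENNReal.ofReal (t * Φinv (1/t)) := by
  rw [← ENNReal.ofReal_mul (by positivity)]
  refine ENNReal.ofReal_le_ofReal ?_
  calc Φinv r / r * Real.exp (-(c * r * t))
      ≤ max ((r * t) ^ (1/p - 1)) ((r * t) ^ (1/q - 1)) * t * Φinv (1/t) *
          Real.exp (-(c * (r * t))) := by
        rw [← mul_assoc]
        gcongr
        exact hΦ.inv_div_le hr ht
    _ = _ := by ring

/-- for `Φ` of class `𝒫` and `c > 0`, the constant
`K = ∫₀^∞ max(s^{1/p−1}, s^{1/q−1})·e^{−cs} ds` is finite and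
`∫₀^∞ (Φ⁻¹(r)/r)·e^{−crt} dr ≤ K·Φ⁻¹(1/t)` for every `t > 0`. -/
theorem integral_inv_div_bound
    (Φ Φinv : ℝ → ℝ) (p q : ℝ) (hΦ : IsClassP Φ Φinv p q) (c : ℝ) (hc : 0 < c) :
    (∫⁻ s in Set.Ioi (0:ℝ),
        ENNReal.ofReal (max (s ^ (1/p - 1)) (s ^ (1/q - 1)) * Real.exp (-(c * s)))) < ∞ ∧
    ∀ t : ℝ, 0 < t →
      (∫⁻ r in Set.Ioi (0:ℝ), ENNReal.ofReal ((Φinv r / r) * Real.exp (-(c * r * t))))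
        ≤ (∫⁻ s in Set.Ioi (0:ℝ),
            ENNReal.ofReal (max (s ^ (1/p - 1)) (s ^ (1/q - 1)) * Real.exp (-(c * s)))) *
          ENNReal.ofReal (Φinv (1/t)) := by
  have hneg_one_lt : ∀ x : ℝ, 1 < x → -1 < 1/x - 1 := fun x hx => by
    have : 0 < 1/x := by positivity
    linarith
  refine ⟨lintegral_Ioi_max_rpow_mul_exp_neg_mul_lt_top (hneg_one_lt p hΦ.1)
    (hneg_one_lt q (hΦ.1.trans hΦ.2.1)) hc, fun t ht => ?_⟩
  set G : ℝ → ℝ≥0∞ := fun s =>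
    ENNReal.ofReal (max (s ^ (1/p - 1)) (s ^ (1/q - 1)) * Real.exp (-(c * s)))
  calc _ ≤ ∫⁻ r in Ioi (0:ℝ), G (r * t) * ENNReal.ofReal (t * Φinv (1/t)) :=
        setLIntegral_mono' measurableSet_Ioi fun r hr => hΦ.ofReal_inv_div_mul_exp_le c hr ht
    _ = ENNReal.ofReal t⁻¹ * (∫⁻ s in Ioi (0:ℝ), G s) * ENNReal.ofReal (t * Φinv (1/t)) := by
        rw [lintegral_mul_const' _ _ ENNReal.ofReal_ne_top, lintegral_Ioi_comp_mul_right G 0 ht,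
          zero_mul]
    _ = ENNReal.ofReal t⁻¹ * ENNReal.ofReal t * (∫⁻ s in Ioi (0:ℝ), G s) *
          ENNReal.ofReal (Φinv (1/t)) := by
        rw [ENNReal.ofReal_mul ht.le]
        ring
    _ = (∫⁻ s in Ioi (0:ℝ), G s) * ENNReal.ofReal (Φinv (1/t)) := by
        rw [← ENNReal.ofReal_mul (inv_nonneg.2 ht.le), inv_mul_cancel₀ ht.ne', ENNReal.ofReal_one,
          one_mul]
end
end

section
/- Let Φ be of class 𝒫 with parameters 1 < p < q < ∞ and let c > 0. Then the constant K = ∫₀^∞ max(s^{−1/p}, s^{−1/q})·e^{−cs} ds is finite, and for every t > 0: ∫₀^∞ e^{−crt} / Φ⁻¹(r) dr ≤ K / (t·Φ⁻¹(1/t)). -/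
/-!
Taking `u = t r` and `v = 1 / t` in the key inequality gives
`Φ⁻¹(1/t) ≤ max ((tr)^{-1/p}, (tr)^{-1/q}) Φ⁻¹(r)`, so the integrand is at most the integrand of
`K` at `s = t r`, divided by `Φ⁻¹(1/t)`; the substitution `s = t r` then contributes the factor
`1/t`. The constant `K` is finite because `1/q < 1/p < 1`, so both terms of the maximum are
Gamma-type integrands.
-/

open MeasureTheory Set Filter Topology ENNReal

noncomputable section

theorem lintegral_Ioi_comp_mul_left (g : ℝ → ℝ≥0∞) {t : ℝ} (ht : 0 < t) :
    ∫⁻ r in Ioi 0, g (t * r) = (ENNReal.ofReal t)⁻¹ * ∫⁻ s in Ioi 0, g s := by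
  have he : MeasurableEmbedding (t * ·) := (Homeomorph.mulLeft₀ t ht.ne').measurableEmbedding
  calc ∫⁻ r in Ioi 0, g (t * r) = ∫⁻ r in (t * ·) ⁻¹' Ioi 0, g (t * r) := by
        rw [preimage_const_mul_Ioi₀ _ ht, zero_div]
    _ = ∫⁻ s in Ioi 0, g s ∂volume.map (t * ·) := by
        rw [he.restrict_map, he.lintegral_map]
    _ = (ENNReal.ofReal t)⁻¹ * ∫⁻ s in Ioi 0, g s := by
        rw [Real.map_volume_mul_left ht.ne', Measure.restrict_smul, lintegral_smul_measure,
          abs_of_pos (inv_pos.2 ht), ENNReal.ofReal_inv_of_pos ht, smul_eq_mul]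

theorem integrableOn_max_rpow_neg_mul_exp_neg_mul {a b c : ℝ} (ha : a < 1) (hb : b < 1)
    (hc : 0 < c) :
    IntegrableOn (fun s => max (s ^ (-a)) (s ^ (-b)) * Real.exp (-(c * s))) (Ioi 0) := by
  have h : ∀ x : ℝ, x < 1 → IntegrableOn (fun s => s ^ (-x) * Real.exp (-(c * s))) (Ioi 0) := by
    intro x hx
    simpa only [Real.rpow_one, neg_mul] using
      integrableOn_rpow_mul_exp_neg_mul_rpow (s := -x) (p := 1) (by linarith) one_pos hc
  refine IntegrableOn.congr_fun ((h a ha).sup (h b hb)) (fun s _ => ?_) measurableSet_Ioi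
  exact (max_mul_of_nonneg _ _ (Real.exp_pos _).le).symm

/-- The submultiplicativity `ρ (s * t) ≤ max 1 s * ρ t` of `ρ` turns into the key ingredient
`min (u ^ a, u ^ b) * f v ≤ f (u * v)`, written here after dividing by the minimum. -/
theorem le_max_rpow_neg_mul_of_eq_rpow_mul {f ρ : ℝ → ℝ} {a b : ℝ}
    (hρ : ∀ s t : ℝ, 0 < s → 0 < t → ρ (s * t) ≤ max 1 s * ρ t)
    (hf : ∀ t : ℝ, 0 < t → f t = t ^ a * ρ (t ^ (b - a))) {u v : ℝ} (hu : 0 < u) (hv : 0 < v) :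
    f v ≤ max (u ^ (-a)) (u ^ (-b)) * f (u * v) := by
  have huv : 0 < u * v := mul_pos hu hv
  have hsplit : ∀ x : ℝ, v ^ x = u ^ (-x) * (u * v) ^ x := fun x => by
    rw [Real.mul_rpow hu.le hv.le, ← mul_assoc, ← Real.rpow_add hu, neg_add_cancel,
      Real.rpow_zero, one_mul]
  have hmax : max (u ^ (-a)) (u ^ (-b)) = u ^ (-a) * max 1 (u ^ (-(b - a))) := by
    rw [mul_max_of_nonneg _ _ (Real.rpow_nonneg hu.le _), mul_one, ← Real.rpow_add hu]
    ring_nf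
  have hρv : ρ (v ^ (b - a)) ≤ max 1 (u ^ (-(b - a))) * ρ ((u * v) ^ (b - a)) := by
    rw [hsplit]
    exact hρ _ _ (Real.rpow_pos_of_pos hu _) (Real.rpow_pos_of_pos huv _)
  rw [hf v hv, hf _ huv, hmax, hsplit a]
  calc u ^ (-a) * (u * v) ^ a * ρ (v ^ (b - a))
      ≤ u ^ (-a) * (u * v) ^ a * (max 1 (u ^ (-(b - a))) * ρ ((u * v) ^ (b - a))) := by
        gcongr
    _ = _ := by ring

theorem IsClassP.div_inv_le_max_rpow_neg_mul_div {Φ Φinv : ℝ → ℝ} {p q : ℝ}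
    (hΦ : IsClassP Φ Φinv p q) {w t r : ℝ} (hw : 0 ≤ w) (ht : 0 < t) (hr : 0 < r) :
    w / Φinv r ≤ max ((t * r) ^ (-(1 / p))) ((t * r) ^ (-(1 / q))) * w / Φinv (1 / t) := by
  obtain ⟨-, -, -, hpos, -, -, ρ, -, -, -, hρ, hform⟩ := hΦ
  have hkey := le_max_rpow_neg_mul_of_eq_rpow_mul hρ hform (mul_pos ht hr) (one_div_pos.2 ht)
  rw [show t * r * (1 / t) = r by field_simp] at hkey
  rw [div_le_div_iff₀ (hpos r hr) (hpos _ (one_div_pos.2 ht))]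
  calc w * Φinv (1 / t) ≤ w * (max ((t * r) ^ (-(1 / p))) ((t * r) ^ (-(1 / q))) * Φinv r) :=
        mul_le_mul_of_nonneg_left hkey hw
    _ = _ := by ring

/-- for `Φ` of class `𝒫` and `c > 0`, the constant
`K = ∫₀^∞ max(s^{−1/p}, s^{−1/q})·e^{−cs} ds` is finite and
`∫₀^∞ e^{−crt}/Φ⁻¹(r) dr ≤ K/(t·Φ⁻¹(1/t))` for every `t > 0`. -/
theorem integral_exp_div_inv_bound
    (Φ Φinv : ℝ → ℝ) (p q : ℝ) (hΦ : IsClassP Φ Φinv p q) (c : ℝ) (hc : 0 < c) :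
    (∫⁻ s in Set.Ioi (0:ℝ),
        ENNReal.ofReal (max (s ^ (-(1/p))) (s ^ (-(1/q))) * Real.exp (-(c * s)))) < ∞ ∧
    ∀ t : ℝ, 0 < t →
      (∫⁻ r in Set.Ioi (0:ℝ), ENNReal.ofReal (Real.exp (-(c * r * t)) / Φinv r))
        ≤ (∫⁻ s in Set.Ioi (0:ℝ),
            ENNReal.ofReal (max (s ^ (-(1/p))) (s ^ (-(1/q))) * Real.exp (-(c * s)))) /
          ENNReal.ofReal (t * Φinv (1/t)) := by
  have ⟨hp, hpq, _, hpos, _⟩ := hΦ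
  set G : ℝ → ℝ≥0∞ := fun s =>
    ENNReal.ofReal (max (s ^ (-(1/p))) (s ^ (-(1/q))) * Real.exp (-(c * s)))
  have hp_inv : 1 / p < 1 := (div_lt_one (by linarith)).2 hp
  have hq_inv : 1 / q < 1 := (div_lt_one (by linarith)).2 (hp.trans hpq)
  refine ⟨(integrableOn_max_rpow_neg_mul_exp_neg_mul hp_inv hq_inv hc).lintegral_lt_top,
    fun t ht => ?_⟩
  have hB : 0 < Φinv (1 / t) := hpos _ (one_div_pos.2 ht)
  have hB_inv_ne_top : (ENNReal.ofReal (Φinv (1 / t)))⁻¹ ≠ ∞ :=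
    ENNReal.inv_ne_top.2 (ENNReal.ofReal_pos.2 hB).ne'
  calc ∫⁻ r in Ioi 0, ENNReal.ofReal (Real.exp (-(c * r * t)) / Φinv r)
      ≤ ∫⁻ r in Ioi 0, G (t * r) * (ENNReal.ofReal (Φinv (1 / t)))⁻¹ := by
        refine setLIntegral_mono' measurableSet_Ioi fun r hr => ?_
        rw [← div_eq_mul_inv, ← ENNReal.ofReal_div_of_pos hB,
          show c * (t * r) = c * r * t by ring]
        exact ENNReal.ofReal_le_ofReal
          (hΦ.div_inv_le_max_rpow_neg_mul_div (Real.exp_pos _).le ht hr)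
    _ = (ENNReal.ofReal t)⁻¹ * (∫⁻ s in Ioi 0, G s) * (ENNReal.ofReal (Φinv (1 / t)))⁻¹ := by
        rw [lintegral_mul_const' _ _ hB_inv_ne_top, lintegral_Ioi_comp_mul_left G ht]
    _ = (∫⁻ s in Ioi 0, G s) / ENNReal.ofReal (t * Φinv (1 / t)) := by
        rw [ENNReal.ofReal_mul ht.le, ENNReal.div_eq_inv_mul,
          ENNReal.mul_inv (Or.inr ENNReal.ofReal_ne_top) (Or.inl ENNReal.ofReal_ne_top)]
        ring
end
end

section
/- Let Φ be of class 𝒫 with parameters 1 < p < q < ∞, let Φ̃ be its complementary Young function, and let p' be the Hölder conjugate of p. Then: (i) for all r ∈ (0,1], Φ⁻¹(r) ≤ Φ⁻¹(1)·r^{1/q}; (ii) for all r ≥ 1, Φ⁻¹(r)/r ≤ (2/Φ̃⁻¹(1))·r^{−1/p'}. Consequently, there exist constants c, α > 0 such that Φ⁻¹(r)/(1 + r) ≤ c·min(r^{α}, r^{−α}) for all r > 0. -/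
open MeasureTheory Set Filter Topology ENNReal

noncomputable section

/-- for `Φ` of class `𝒫` with complementary Young function `Φ̃`
(with inverse `Φ̃⁻¹`) and `p'` the Hölder conjugate of `p` (`1/p' = 1 − 1/p`):
(i) `Φ⁻¹(r) ≤ Φ⁻¹(1)·r^{1/q}` for `r ∈ (0,1]`;
(ii) `Φ⁻¹(r)/r ≤ (2/Φ̃⁻¹(1))·r^{−1/p'}` for `r ≥ 1`;
consequently there exist `c, α > 0` with `Φ⁻¹(r)/(1+r) ≤ c·min(r^α, r^{−α})`. -/
theorem inv_decay_estimates
    (Φ Φinv Φt Φtinv : ℝ → ℝ) (p q : ℝ) (hΦ : IsClassP Φ Φinv p q)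
    (hΦ0 : Φ 0 = 0)
    (hΦt : ∀ s : ℝ, Φt s = sSup {x : ℝ | ∃ t : ℝ, 0 ≤ t ∧ x = s * t - Φ t})
    (hΦtinvpos : ∀ s : ℝ, 0 < s → 0 < Φtinv s)
    (hΦtinv1 : ∀ t : ℝ, 0 < t → Φtinv (Φt t) = t)
    (hΦtinv2 : ∀ s : ℝ, 0 < s → Φt (Φtinv s) = s) :
    (∀ r : ℝ, 0 < r → r ≤ 1 → Φinv r ≤ Φinv 1 * r ^ (1/q)) ∧
    (∀ r : ℝ, 1 ≤ r → Φinv r / r ≤ (2 / Φtinv 1) * r ^ (-(1 - 1/p))) ∧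
    ∃ c : ℝ, 0 < c ∧ ∃ α : ℝ, 0 < α ∧
      ∀ r : ℝ, 0 < r → Φinv r / (1 + r) ≤ c * min (r ^ α) (r ^ (-α)) := by
  obtain ⟨hp, hpq, hΦpos, hΦinvpos, hinv1, hinv2, ρ, hρcont, hρconc, hρpos, hρmax, hρform⟩ := hΦ
  have hp0 : (0:ℝ) < p := by linarith
  have hq0 : (0:ℝ) < q := by linarith
  have hqinv : (0:ℝ) < 1/q := by positivity
  have hqp : 1/q - 1/p < 0 := by
    have : 1/q < 1/p := by
      apply one_div_lt_one_div_of_lt hp0 hpq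
    linarith
  have hρ1 : 0 < ρ 1 := hρpos 1 one_pos
  have hΦinv1 : Φinv 1 = ρ 1 := by
    rw [hρform 1 one_pos, Real.one_rpow, Real.one_rpow, one_mul]
  -- Lemma A : for 0 < r ≤ 1, Φinv r ≤ r^(1/q) * Φinv 1
  have lemA : ∀ r : ℝ, 0 < r → r ≤ 1 → Φinv r ≤ r ^ (1/q) * Φinv 1 := by
    intro r hr hr1
    have hra : (0:ℝ) < r ^ (1/q - 1/p) := Real.rpow_pos_of_pos hr _
    have hra1 : (1:ℝ) ≤ r ^ (1/q - 1/p) :=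
      Real.one_le_rpow_of_pos_of_le_one_of_nonpos hr hr1 (le_of_lt hqp)
    have h1 : ρ (r ^ (1/q - 1/p)) ≤ r ^ (1/q - 1/p) * ρ 1 := by
      have := hρmax (r ^ (1/q - 1/p)) 1 hra one_pos
      rwa [mul_one, max_eq_right hra1] at this
    rw [hρform r hr, hΦinv1]
    calc r ^ (1/p) * ρ (r ^ (1/q - 1/p)) ≤ r ^ (1/p) * (r ^ (1/q - 1/p) * ρ 1) := by
          apply mul_le_mul_of_nonneg_left h1 (le_of_lt (Real.rpow_pos_of_pos hr _))
      _ = r ^ (1/q) * ρ 1 := by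
          rw [← mul_assoc, ← Real.rpow_add hr]
          norm_num
  -- Lemma B : for 1 ≤ r, Φinv r ≤ r^(1/p) * Φinv 1
  have lemB : ∀ r : ℝ, 1 ≤ r → Φinv r ≤ r ^ (1/p) * Φinv 1 := by
    intro r hr1
    have hr : (0:ℝ) < r := lt_of_lt_of_le one_pos hr1
    have hra : (0:ℝ) < r ^ (1/q - 1/p) := Real.rpow_pos_of_pos hr _
    have hra1 : r ^ (1/q - 1/p) ≤ 1 :=
      Real.rpow_le_one_of_one_le_of_nonpos hr1 (le_of_lt hqp)
    have h1 : ρ (r ^ (1/q - 1/p)) ≤ ρ 1 := by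
      have := hρmax (r ^ (1/q - 1/p)) 1 hra one_pos
      rwa [mul_one, max_eq_left hra1, one_mul] at this
    rw [hρform r hr, hΦinv1]
    exact mul_le_mul_of_nonneg_left h1 (le_of_lt (Real.rpow_pos_of_pos hr _))
  have hK : 0 < Φinv 1 := hΦinvpos 1 one_pos
  set K : ℝ := Φinv 1 with hKdef
  -- Lemma C : for t ≥ K (t > 0), Φ t ≥ 1
  have lemC : ∀ t : ℝ, 0 < t → K ≤ t → 1 ≤ Φ t := by
    intro t ht htK
    by_contra h
    push_neg at h
    have hΦt' : 0 < Φ t := hΦpos t ht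
    have := lemA (Φ t) hΦt' (le_of_lt h)
    rw [hinv1 t ht] at this
    have hlt : (Φ t) ^ (1/q) < 1 := Real.rpow_lt_one (le_of_lt hΦt') h hqinv
    have : t < 1 * K := lt_of_le_of_lt this (by
      apply mul_lt_mul_of_pos_right hlt hK)
    rw [one_mul] at this
    linarith
  set v : ℝ := Φtinv 1 with hvdef
  have hv : 0 < v := hΦtinvpos 1 one_pos
  -- key : Φinv 1 * Φtinv 1 ≤ 2
  have hKv : K * v ≤ 2 := by
    set S : Set ℝ := {x : ℝ | ∃ t : ℝ, 0 ≤ t ∧ x = v * t - Φ t} with hSdef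
    set T : ℝ := max K ((v * K ^ p) ^ (1/(p-1))) with hTdef
    have hT0 : 0 < T := lt_of_lt_of_le hK (le_max_left _ _)
    have hbdd : ∀ x ∈ S, x ≤ v * T := by
      rintro x ⟨t, ht0, rfl⟩
      rcases eq_or_lt_of_le ht0 with h | ht
      · rw [← h, hΦ0]
        simp
        positivity
      rcases le_or_gt t T with hle | hgt
      · have : 0 < Φ t := hΦpos t ht
        nlinarith [mul_le_mul_of_nonneg_left hle (le_of_lt hv)]
      · -- t > T : show Φ t ≥ v * t
        have htK : K ≤ t := le_of_lt (lt_of_le_of_lt (le_max_left _ _) hgt)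
        have h1 : 1 ≤ Φ t := lemC t ht htK
        have hΦt' : 0 < Φ t := hΦpos t ht
        have h2 : t ≤ (Φ t) ^ (1/p) * K := by
          have := lemB (Φ t) h1
          rwa [hinv1 t ht] at this
        -- deduce Φ t ≥ (t/K)^p
        have hp' : p ≠ 0 := ne_of_gt hp0
        have h3 : (t / K) ^ p ≤ Φ t := by
          have hbase : t / K ≤ (Φ t) ^ (1/p) := by
            rw [div_le_iff₀ hK]
            exact h2
          have := Real.rpow_le_rpow (by positivity) hbase (le_of_lt hp0)
          rwa [← Real.rpow_mul (le_of_lt hΦt'),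
            one_div_mul_cancel hp', Real.rpow_one] at this
        have h4 : v * t ≤ (t / K) ^ p := by
          have htT : (v * K ^ p) ^ (1/(p-1)) ≤ t :=
            le_of_lt (lt_of_le_of_lt (le_max_right _ _) hgt)
          have hpm1 : (0:ℝ) < p - 1 := by linarith
          have h5 : v * K ^ p ≤ t ^ (p-1) := by
            have := Real.rpow_le_rpow (by positivity) htT (le_of_lt hpm1)
            rwa [← Real.rpow_mul (by positivity), one_div_mul_cancel (ne_of_gt hpm1),
              Real.rpow_one] at this
          have h6 : v * K ^ p * t ≤ t ^ (p-1) * t :=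
            mul_le_mul_of_nonneg_right h5 (le_of_lt ht)
          have h7 : t ^ (p-1) * t = t ^ p := by
            nth_rewrite 2 [← Real.rpow_one t]
            rw [← Real.rpow_add ht]
            norm_num
          rw [Real.div_rpow (le_of_lt ht) (le_of_lt hK), le_div_iff₀ (by positivity)]
          calc v * t * K ^ p = v * K ^ p * t := by ring
            _ ≤ t ^ p := by rw [← h7]; exact h6
        nlinarith
    have hS1 : sSup S = 1 := by
      rw [← hΦt v, hΦtinv2 1 one_pos]
    have hmem : v * K - 1 ∈ S := by
      refine ⟨K, le_of_lt hK, ?_⟩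
      rw [hinv2 1 one_pos]
    have := le_csSup ⟨v * T, hbdd⟩ hmem
    rw [hS1] at this
    nlinarith
  have hK2v : K ≤ 2 / v := by
    rw [le_div_iff₀ hv]; linarith [hKv]
  have h2v : 0 < 2 / v := by positivity
  refine ⟨?_, ?_, ?_⟩
  · intro r hr hr1
    rw [mul_comm]
    exact lemA r hr hr1
  · intro r hr1
    have hr : (0:ℝ) < r := lt_of_lt_of_le one_pos hr1
    have h1 : Φinv r ≤ r ^ (1/p) * (2/v) :=
      le_trans (lemB r hr1) (mul_le_mul_of_nonneg_left hK2v (by positivity))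
    have h2 : Φinv r / r ≤ r ^ (1/p) * (2/v) / r := by gcongr
    refine le_trans h2 (le_of_eq ?_)
    rw [show -(1 - 1/p) = 1/p - 1 by ring, Real.rpow_sub hr, Real.rpow_one]
    ring
  · refine ⟨2/v, h2v, min (1/q) (1 - 1/p), ?_, ?_⟩
    · apply lt_min hqinv
      have : 1/p < 1 := by
        rw [div_lt_one hp0]; linarith
      linarith
    intro r hr
    set α : ℝ := min (1/q) (1 - 1/p) with hαdef
    have hα0 : 0 < α := by
      apply lt_min hqinv
      have : 1/p < 1 := by rw [div_lt_one hp0]; linarith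
      linarith
    have hΦinvr : 0 ≤ Φinv r := le_of_lt (hΦinvpos r hr)
    rcases le_or_gt r 1 with hr1 | hr1
    · have hmin : min (r ^ α) (r ^ (-α)) = r ^ α := by
        apply min_eq_left
        apply Real.rpow_le_rpow_of_exponent_ge hr hr1
        linarith
      rw [hmin]
      have h1 : Φinv r / (1 + r) ≤ Φinv r := by
        apply div_le_self hΦinvr
        linarith
      have h2 : Φinv r ≤ r ^ (1/q) * (2/v) :=
        le_trans (lemA r hr hr1) (mul_le_mul_of_nonneg_left hK2v (by positivity))
      have h3 : r ^ (1/q) ≤ r ^ α :=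
        Real.rpow_le_rpow_of_exponent_ge hr hr1 (min_le_left _ _)
      calc Φinv r / (1 + r) ≤ r ^ (1/q) * (2/v) := le_trans h1 h2
        _ ≤ r ^ α * (2/v) := mul_le_mul_of_nonneg_right h3 (le_of_lt h2v)
        _ = 2/v * r ^ α := by ring
    · have hr1' : (1:ℝ) ≤ r := le_of_lt hr1
      have hmin : min (r ^ α) (r ^ (-α)) = r ^ (-α) := by
        apply min_eq_right
        apply Real.rpow_le_rpow_of_exponent_le hr1'
        linarith
      rw [hmin]
      have h1 : Φinv r / (1 + r) ≤ Φinv r / r := by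
        apply div_le_div_of_nonneg_left hΦinvr hr
        linarith
      have h2 : Φinv r / r ≤ (2/v) * r ^ (-(1 - 1/p)) := by
        have h3 : Φinv r ≤ r ^ (1/p) * (2/v) :=
          le_trans (lemB r hr1') (mul_le_mul_of_nonneg_left hK2v (by positivity))
        have h4 : Φinv r / r ≤ r ^ (1/p) * (2/v) / r := by gcongr
        refine le_trans h4 (le_of_eq ?_)
        rw [show -(1 - 1/p) = 1/p - 1 by ring, Real.rpow_sub hr, Real.rpow_one]
        ring
      have h5 : r ^ (-(1 - 1/p)) ≤ r ^ (-α) := by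
        apply Real.rpow_le_rpow_of_exponent_le hr1'
        have := min_le_right (1/q) (1 - 1/p)
        linarith
      calc Φinv r / (1 + r) ≤ (2/v) * r ^ (-(1 - 1/p)) := le_trans h1 h2
        _ ≤ (2/v) * r ^ (-α) := mul_le_mul_of_nonneg_left h5 (le_of_lt h2v)
end
end
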